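/- arXiv:1603.08231 — 8 statements merged into one kernel-verified Lean document; each statement's English description precedes it below -/
import Mathlib

section
/- For every ℓ ∈ N, every subset S ⊆ {1,…,ℓ} with S̄ = {1,…,ℓ}\S, and every scenario j ∈ Ω, every point (x, y, z) ∈ P satisfies the big-M (ℓ,S) inequality Σ_{i∈S} y_i + Σ_{i∈S̄} D_{jiℓ} x_i ≥ D_{j1ℓ} (1 − z_j), where D_{jiℓ} = Σ_{p=i}^{ℓ} d_{jp}. -/
noncomputable section

/-- Cumulative demand of scenario `j` through periods `1,…,t`. -/
def cumD (d : ℕ → ℕ → ℝ) (j t : ℕ) : ℝ := ∑ i ∈ Finset.Icc 1 t, d j i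

/-- Big-M constant `M_i = max_{j ∈ Ω} Σ_{p=i}^n d_{j p}`. -/
def bigM (d : ℕ → ℕ → ℝ) (n m i : ℕ) : ℝ :=
  sSup ((fun j => ∑ p ∈ Finset.Icc i n, d j p) '' Set.Icc 1 m)

/-- Membership in the feasible set `P` of the static probabilistic lot-sizing problem. -/
def memP (d : ℕ → ℕ → ℝ) (n m k : ℕ) (x y z : ℕ → ℝ) : Prop :=
  (∀ i ∈ Finset.Icc 1 n, x i = 0 ∨ x i = 1) ∧
  (∀ i ∈ Finset.Icc 1 n, 0 ≤ y i) ∧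
  (∀ j ∈ Finset.Icc 1 m, z j = 0 ∨ z j = 1) ∧
  (∀ t ∈ Finset.Icc 1 n, ∀ j ∈ Finset.Icc 1 m,
    cumD d j t * (1 - z j) ≤ ∑ i ∈ Finset.Icc 1 t, y i) ∧
  (∑ j ∈ Finset.Icc 1 m, z j ≤ (k : ℝ)) ∧
  (∀ i ∈ Finset.Icc 1 n, y i ≤ bigM d n m i * x i)

/-! Let `i₀` be the first period outside `S` with a setup (`x i₀ = 1`), or `ℓ + 1` if there is
none. No production takes place outside `S` before `i₀`, so when `z j = 0` the demand up to
`i₀ - 1` is covered by `∑ i ∈ S, y i`, while the remaining demand `∑ p ∈ Icc i₀ ℓ, d j p` is the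
term of index `i₀` of the second sum. When `z j = 1` the left side vanishes. -/

open Finset

theorem Finset.sum_le_sum_of_eq_zero_on_sdiff {ι M : Type*} [DecidableEq ι] [AddCommMonoid M]
    [PartialOrder M] [IsOrderedAddMonoid M] {s t : Finset ι} {f : ι → M}
    (hzero : ∀ i ∈ s \ t, f i = 0) (hnonneg : ∀ i ∈ t, 0 ≤ f i) :
    ∑ i ∈ s, f i ≤ ∑ i ∈ t, f i := by
  classical
  rw [← sum_filter_ne_zero]
  refine sum_le_sum_of_subset_of_nonneg (fun i hi => ?_) fun i hi _ => hnonneg i hi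
  rw [mem_filter] at hi
  by_contra hit
  exact hi.2 (hzero i (mem_sdiff.2 ⟨hi.1, hit⟩))

theorem cumD_eq_cumD_add_sum_Icc (d : ℕ → ℕ → ℝ) (j : ℕ) {t ℓ : ℕ} (h : t ≤ ℓ) :
    cumD d j ℓ = cumD d j t + ∑ p ∈ Icc (t + 1) ℓ, d j p := by
  change ∑ i ∈ Icc (0 + 1) ℓ, d j i = ∑ i ∈ Icc (0 + 1) t, d j i + _
  simp only [Icc_add_one_left_eq_Ioc]
  exact (sum_Ioc_consecutive _ t.zero_le h).symm

namespace memP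

variable {d : ℕ → ℕ → ℝ} {n m k : ℕ} {x y z : ℕ → ℝ} (hP : memP d n m k x y z)
include hP

theorem x_nonneg {i : ℕ} (hi : i ∈ Icc 1 n) : 0 ≤ x i := by
  rcases hP.1 i hi with h | h <;> simp [h]

theorem y_eq_zero_of_x_eq_zero {i : ℕ} (hi : i ∈ Icc 1 n) (hx : x i = 0) : y i = 0 := by
  have := hP.2.2.2.2.2 i hi
  rw [hx, mul_zero] at this
  exact this.antisymm (hP.2.1 i hi)

theorem cumD_le_sum_y {t j : ℕ} (ht : t ≤ n) (hj : j ∈ Icc 1 m) (hz : z j = 0) :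
    cumD d j t ≤ ∑ i ∈ Icc 1 t, y i := by
  rcases t.eq_zero_or_pos with rfl | ht0
  · simp [cumD]
  · simpa [hz] using hP.2.2.2.1 t (mem_Icc.2 ⟨ht0, ht⟩) j hj

variable {ℓ j : ℕ} (hℓ : ℓ ≤ n)
include hℓ

theorem tail_mul_x_nonneg (hd : ∀ j ∈ Icc 1 m, ∀ i ∈ Icc 1 n, 0 ≤ d j i) (hj : j ∈ Icc 1 m)
    {i : ℕ} (hi : i ∈ Icc 1 ℓ) : 0 ≤ (∑ p ∈ Icc i ℓ, d j p) * x i := by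
  have hi := mem_Icc.1 hi
  refine mul_nonneg (sum_nonneg fun p hp => hd j hj p ?_)
    (hP.x_nonneg (mem_Icc.2 ⟨hi.1, by omega⟩))
  have hp := mem_Icc.1 hp
  exact mem_Icc.2 ⟨by omega, by omega⟩

variable {S : Finset ℕ} (hS : S ⊆ Icc 1 ℓ)
include hS

theorem cumD_le_sum_y_add_sum_Icc (hj : j ∈ Icc 1 m) (hz : z j = 0) {t : ℕ} (ht : t ≤ ℓ)
    (hx : ∀ i ∈ Icc 1 t \ S, x i = 0) :
    cumD d j ℓ ≤ ∑ i ∈ S, y i + ∑ p ∈ Icc (t + 1) ℓ, d j p := by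
  have hIcc : Icc 1 ℓ ⊆ Icc 1 n := Icc_subset_Icc le_rfl hℓ
  have hy_le : ∑ i ∈ Icc 1 t, y i ≤ ∑ i ∈ S, y i :=
    sum_le_sum_of_eq_zero_on_sdiff
      (fun i hi => hP.y_eq_zero_of_x_eq_zero
        (hIcc (Icc_subset_Icc le_rfl ht (mem_sdiff.1 hi).1)) (hx i hi))
      (fun i hi => hP.2.1 i (hIcc (hS hi)))
  rw [cumD_eq_cumD_add_sum_Icc d j ht]
  gcongr
  exact (hP.cumD_le_sum_y (ht.trans hℓ) hj hz).trans hy_le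

theorem cumD_le_bigM_ellS_rhs (hd : ∀ j ∈ Icc 1 m, ∀ i ∈ Icc 1 n, 0 ≤ d j i)
    (hj : j ∈ Icc 1 m) (hz : z j = 0) :
    cumD d j ℓ ≤ ∑ i ∈ S, y i + ∑ i ∈ Icc 1 ℓ \ S, (∑ p ∈ Icc i ℓ, d j p) * x i := by
  classical
  have hIcc : Icc 1 ℓ ⊆ Icc 1 n := Icc_subset_Icc le_rfl hℓ
  have hterm_nonneg : ∀ i ∈ Icc 1 ℓ \ S, 0 ≤ (∑ p ∈ Icc i ℓ, d j p) * x i :=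
    fun i hi => hP.tail_mul_x_nonneg hℓ hd hj (mem_sdiff.1 hi).1
  set T := {i ∈ Icc 1 ℓ \ S | x i = 1}
  have hx_zero_below : ∀ {t}, t ≤ ℓ → (∀ i ∈ T, t < i) → ∀ i ∈ Icc 1 t \ S, x i = 0 := by
    intro t ht hT i hi
    have hi' : i ∈ Icc 1 ℓ \ S := sdiff_subset_sdiff (Icc_subset_Icc le_rfl ht) le_rfl hi
    refine (hP.1 i (hIcc (mem_sdiff.1 hi').1)).resolve_right fun hx1 => ?_
    have := hT i (mem_filter.2 ⟨hi', hx1⟩)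
    have := (mem_Icc.1 (mem_sdiff.1 hi).1).2
    omega
  rcases T.eq_empty_or_nonempty with hT | hT
  · have := hP.cumD_le_sum_y_add_sum_Icc hℓ hS hj hz le_rfl
      (hx_zero_below le_rfl (by simp [hT]))
    rw [Icc_eq_empty (by omega), sum_empty, add_zero] at this
    linarith [sum_nonneg hterm_nonneg]
  · obtain ⟨i₀, hi₀T, hi₀_min⟩ : ∃ i₀ ∈ T, ∀ i ∈ T, i₀ ≤ i :=
      ⟨T.min' hT, T.min'_mem hT, T.min'_le⟩
    obtain ⟨hi₀, hx₀⟩ := mem_filter.1 hi₀T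
    obtain ⟨hi₀_pos, hi₀_le⟩ := mem_Icc.1 (mem_sdiff.1 hi₀).1
    have := hP.cumD_le_sum_y_add_sum_Icc hℓ hS hj hz (t := i₀ - 1) (by omega)
      (hx_zero_below (by omega) fun i hi => by have := hi₀_min i hi; omega)
    rw [Nat.sub_add_cancel hi₀_pos] at this
    have hsingle := single_le_sum hterm_nonneg hi₀
    rw [hx₀, mul_one] at hsingle
    linarith

end memP

theorem bigM_ellS_valid_general (n m k : ℕ)
    (d : ℕ → ℕ → ℝ)
    (hd : ∀ j ∈ Finset.Icc 1 m, ∀ i ∈ Finset.Icc 1 n, 0 ≤ d j i)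
    (x y z : ℕ → ℝ) (hP : memP d n m k x y z)
    (ℓ : ℕ) (hℓ : ℓ ∈ Finset.Icc 1 n)
    (S : Finset ℕ) (hS : S ⊆ Finset.Icc 1 ℓ)
    (j : ℕ) (hj : j ∈ Finset.Icc 1 m) :
    cumD d j ℓ * (1 - z j) ≤
      ∑ i ∈ S, y i +
      ∑ i ∈ Finset.Icc 1 ℓ \ S, (∑ p ∈ Finset.Icc i ℓ, d j p) * x i := by
  have hℓn := (mem_Icc.1 hℓ).2
  rcases hP.2.2.1 j hj with hz | hz
  · simpa [hz] using hP.cumD_le_bigM_ellS_rhs hℓn hS hd hj hz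
  · simp only [hz, sub_self, mul_zero]
    exact add_nonneg (sum_nonneg fun i hi => hP.2.1 i (Icc_subset_Icc le_rfl hℓn (hS hi)))
      (sum_nonneg fun i hi => hP.tail_mul_x_nonneg hℓn hd hj (mem_sdiff.1 hi).1)

/-- the big-M `(ℓ, S)` inequalities are valid for `P`. -/
theorem bigM_ellS_valid (n m k : ℕ) (hn : 1 ≤ n) (hm : 1 ≤ m) (hk : k < m)
    (d : ℕ → ℕ → ℝ)
    (hd : ∀ j ∈ Finset.Icc 1 m, ∀ i ∈ Finset.Icc 1 n, 0 ≤ d j i)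
    (x y z : ℕ → ℝ) (hP : memP d n m k x y z)
    (ℓ : ℕ) (hℓ : ℓ ∈ Finset.Icc 1 n)
    (S : Finset ℕ) (hS : S ⊆ Finset.Icc 1 ℓ)
    (j : ℕ) (hj : j ∈ Finset.Icc 1 m) :
    cumD d j ℓ * (1 - z j) ≤
      ∑ i ∈ S, y i +
      ∑ i ∈ Finset.Icc 1 ℓ \ S, (∑ p ∈ Finset.Icc i ℓ, d j p) * x i :=
  bigM_ellS_valid_general n m k d hd x y z hP ℓ hℓ S hS j hj

end
end

section
/- For every ℓ ∈ N and every subset T_ℓ = {t_{ℓ(1)},…,t_{ℓ(a)}} ⊆ T*_ℓ ordered so that D_{t_{ℓ(1)}} ≥ D_{t_{ℓ(2)}} ≥ … ≥ D_{t_{ℓ(a)}}, with the convention t_{ℓ(a+1)} := σ_{ℓ(k+1)}, every point (x, y, z) ∈ P satisfies the basic mixing inequality Σ_{i=1}^{ℓ} y_i + Σ_{j=1}^{a} (D_{t_{ℓ(j)}} − D_{t_{ℓ(j+1)}}) z_{t_{ℓ(j)}} ≥ D_{t_{ℓ(1)}}. -/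
noncomputable section

private lemma telescope_aux (f : ℕ → ℝ) (c : ℕ) :
    ∑ p ∈ Finset.Icc 1 c, (f p - f (p + 1)) = f 1 - f (c + 1) := by
  induction c with
  | zero => simp
  | succ c ih =>
    rw [Finset.sum_Icc_succ_top (by omega), ih]; ring

/-- the basic mixing inequalities are valid for `P`.
`σ i` is a permutation of the scenarios `1,…,m` sorting the cumulative demands
through period `i` in nonincreasing order; `τ p = t_{ℓ(p)}` for `p = 1,…,a`
lists the chosen subset `T_ℓ ⊆ T*_ℓ` (the `k` largest scenarios of period `ℓ`),
with the convention `τ (a+1) = σ_{ℓ(k+1)}`. -/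
theorem mixing_valid (n m k : ℕ) (hn : 1 ≤ n) (hm : 1 ≤ m) (hk : k < m)
    (d : ℕ → ℕ → ℝ)
    (hd : ∀ j ∈ Finset.Icc 1 m, ∀ i ∈ Finset.Icc 1 n, 0 ≤ d j i)
    (σ : ℕ → ℕ → ℕ)
    (hσbij : ∀ i ∈ Finset.Icc 1 n, Set.BijOn (σ i) (Set.Icc 1 m) (Set.Icc 1 m))
    (hσord : ∀ i ∈ Finset.Icc 1 n, ∀ p q, 1 ≤ p → p ≤ q → q ≤ m →
      cumD d (σ i q) i ≤ cumD d (σ i p) i)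
    (x y z : ℕ → ℝ) (hP : memP d n m k x y z)
    (ℓ : ℕ) (hℓ : ℓ ∈ Finset.Icc 1 n)
    (a : ℕ) (ha : 1 ≤ a) (τ : ℕ → ℕ)
    (hτmem : ∀ p ∈ Finset.Icc 1 a, τ p ∈ (Finset.Icc 1 k).image (σ ℓ))
    (hτinj : Set.InjOn τ (Set.Icc 1 a))
    (hτord : ∀ p q, 1 ≤ p → p ≤ q → q ≤ a → cumD d (τ q) ℓ ≤ cumD d (τ p) ℓ)
    (hτconv : τ (a + 1) = σ ℓ (k + 1)) :
    cumD d (τ 1) ℓ ≤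
      ∑ i ∈ Finset.Icc 1 ℓ, y i +
      ∑ p ∈ Finset.Icc 1 a, (cumD d (τ p) ℓ - cumD d (τ (p + 1)) ℓ) * z (τ p) := by
  obtain ⟨hx01, hy0, hz01, hfeas, hzsum, hxy⟩ := hP
  have hσB := hσbij ℓ hℓ
  have hσmap : ∀ q, 1 ≤ q → q ≤ m → σ ℓ q ∈ Finset.Icc 1 m := by
    intro q h1 h2
    have := hσB.mapsTo (Set.mem_Icc.mpr ⟨h1, h2⟩)
    simpa [Finset.mem_Icc, Set.mem_Icc] using this
  have hτσ : ∀ p ∈ Finset.Icc 1 a, ∃ q, 1 ≤ q ∧ q ≤ k ∧ τ p = σ ℓ q := by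
    intro p hp
    obtain ⟨q, hq, hqe⟩ := Finset.mem_image.mp (hτmem p hp)
    exact ⟨q, (Finset.mem_Icc.mp hq).1, (Finset.mem_Icc.mp hq).2, hqe.symm⟩
  have hτm : ∀ p ∈ Finset.Icc 1 a, τ p ∈ Finset.Icc 1 m := by
    intro p hp
    obtain ⟨q, h1, h2, he⟩ := hτσ p hp
    rw [he]; exact hσmap q h1 (by omega)
  have hmono : ∀ p, 1 ≤ p → p ≤ a → cumD d (τ (p + 1)) ℓ ≤ cumD d (τ p) ℓ := by
    intro p h1 h2
    rcases eq_or_lt_of_le h2 with rfl | hlt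
    · rw [hτconv]
      obtain ⟨q, hq1, hq2, he⟩ := hτσ p (Finset.mem_Icc.mpr ⟨h1, le_rfl⟩)
      rw [he]
      exact hσord ℓ hℓ q (k + 1) hq1 (by omega) (by omega)
    · exact hτord p (p + 1) h1 (by omega) (by omega)
  have hzτnn : ∀ p ∈ Finset.Icc 1 a, 0 ≤ z (τ p) := by
    intro p hp
    rcases hz01 (τ p) (hτm p hp) with h | h <;> simp [h]
  have htermnn : ∀ p ∈ Finset.Icc 1 a,
      0 ≤ (cumD d (τ p) ℓ - cumD d (τ (p + 1)) ℓ) * z (τ p) := by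
    intro p hp
    have h := Finset.mem_Icc.mp hp
    exact mul_nonneg (by linarith [hmono p h.1 h.2]) (hzτnn p hp)
  suffices h : ∃ b, 1 ≤ b ∧ b ≤ a + 1 ∧
      cumD d (τ b) ℓ ≤ ∑ i ∈ Finset.Icc 1 ℓ, y i ∧
      ∀ p, 1 ≤ p → p < b → z (τ p) = 1 by
    obtain ⟨b, hb1, hb2, hbY, hbz⟩ := h
    have hsub : Finset.Icc 1 (b - 1) ⊆ Finset.Icc 1 a := by
      intro p hp; simp only [Finset.mem_Icc] at *; omega
    have hstep1 : ∑ p ∈ Finset.Icc 1 (b - 1),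
          (cumD d (τ p) ℓ - cumD d (τ (p + 1)) ℓ) * z (τ p)
        ≤ ∑ p ∈ Finset.Icc 1 a, (cumD d (τ p) ℓ - cumD d (τ (p + 1)) ℓ) * z (τ p) :=
      Finset.sum_le_sum_of_subset_of_nonneg hsub (fun p hp _ => htermnn p hp)
    have hstep2 : ∑ p ∈ Finset.Icc 1 (b - 1),
          (cumD d (τ p) ℓ - cumD d (τ (p + 1)) ℓ) * z (τ p)
        = cumD d (τ 1) ℓ - cumD d (τ b) ℓ := by
      have : ∑ p ∈ Finset.Icc 1 (b - 1),
            (cumD d (τ p) ℓ - cumD d (τ (p + 1)) ℓ) * z (τ p)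
          = ∑ p ∈ Finset.Icc 1 (b - 1), (cumD d (τ p) ℓ - cumD d (τ (p + 1)) ℓ) := by
        refine Finset.sum_congr rfl (fun p hp => ?_)
        have h := Finset.mem_Icc.mp hp
        rw [hbz p h.1 (by omega)]; ring
      rw [this, telescope_aux, show b - 1 + 1 = b by omega]
    linarith
  by_cases hcase : ((Finset.Icc 1 a).filter (fun p => z (τ p) = 0)).Nonempty
  · set S := (Finset.Icc 1 a).filter (fun p => z (τ p) = 0) with hS
    set b := S.min' hcase with hb
    have hbS : b ∈ S := S.min'_mem hcase
    have hbIcc : b ∈ Finset.Icc 1 a := (Finset.mem_filter.mp hbS).1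
    have hbz0 : z (τ b) = 0 := (Finset.mem_filter.mp hbS).2
    have hbb := Finset.mem_Icc.mp hbIcc
    refine ⟨b, hbb.1, by omega, ?_, ?_⟩
    · have := hfeas ℓ hℓ (τ b) (hτm b hbIcc)
      rw [hbz0] at this; linarith
    · intro p hp1 hp2
      have hpIcc : p ∈ Finset.Icc 1 a := Finset.mem_Icc.mpr ⟨hp1, by omega⟩
      rcases hz01 (τ p) (hτm p hpIcc) with h | h
      · exfalso
        have : p ∈ S := Finset.mem_filter.mpr ⟨hpIcc, h⟩
        have := S.min'_le p this
        omega
      · exact h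
  · refine ⟨a + 1, by omega, le_rfl, ?_, ?_⟩
    · -- exists q₀ ∈ [1, k+1] with z (σ ℓ q₀) = 0
      have hzex : ∃ q₀, 1 ≤ q₀ ∧ q₀ ≤ k + 1 ∧ z (σ ℓ q₀) = 0 := by
        by_contra hcon
        push_neg at hcon
        have hall1 : ∀ q ∈ Finset.Icc 1 (k + 1), z (σ ℓ q) = 1 := by
          intro q hq
          have hq' := Finset.mem_Icc.mp hq
          rcases hz01 (σ ℓ q) (hσmap q hq'.1 (by omega)) with h | h
          · exact absurd h (hcon q hq'.1 hq'.2)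
          · exact h
        have hinj : ∀ p ∈ Finset.Icc 1 (k + 1), ∀ q ∈ Finset.Icc 1 (k + 1),
            σ ℓ p = σ ℓ q → p = q := by
          intro p hp q hq he
          have hp' := Finset.mem_Icc.mp hp
          have hq' := Finset.mem_Icc.mp hq
          exact hσB.injOn (Set.mem_Icc.mpr ⟨hp'.1, by omega⟩)
            (Set.mem_Icc.mpr ⟨hq'.1, by omega⟩) he
        have himg : ∑ j ∈ (Finset.Icc 1 (k + 1)).image (σ ℓ), z j = (k + 1 : ℝ) := by
          rw [Finset.sum_image hinj]
          rw [Finset.sum_congr rfl hall1]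
          simp
        have hsubm : (Finset.Icc 1 (k + 1)).image (σ ℓ) ⊆ Finset.Icc 1 m := by
          intro j hj
          obtain ⟨q, hq, hqe⟩ := Finset.mem_image.mp hj
          have hq' := Finset.mem_Icc.mp hq
          rw [← hqe]; exact hσmap q hq'.1 (by omega)
        have hle : ∑ j ∈ (Finset.Icc 1 (k + 1)).image (σ ℓ), z j
            ≤ ∑ j ∈ Finset.Icc 1 m, z j := by
          refine Finset.sum_le_sum_of_subset_of_nonneg hsubm (fun j hj _ => ?_)
          rcases hz01 j hj with h | h <;> simp [h]
        rw [himg] at hle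
        have : (k + 1 : ℝ) ≤ (k : ℝ) := le_trans hle hzsum
        linarith
      obtain ⟨q₀, hq1, hq2, hq0⟩ := hzex
      have hY : cumD d (σ ℓ q₀) ℓ ≤ ∑ i ∈ Finset.Icc 1 ℓ, y i := by
        have := hfeas ℓ hℓ (σ ℓ q₀) (hσmap q₀ hq1 (by omega))
        rw [hq0] at this; linarith
      have := hσord ℓ hℓ q₀ (k + 1) hq1 hq2 (by omega)
      rw [hτconv]; linarith
    · intro p hp1 hp2
      have hpIcc : p ∈ Finset.Icc 1 a := Finset.mem_Icc.mpr ⟨hp1, by omega⟩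
      rcases hz01 (τ p) (hτm p hpIcc) with h | h
      · exact absurd ⟨p, Finset.mem_filter.mpr ⟨hpIcc, h⟩⟩ hcase
      · exact h


end
end

section
/- Every point (x, y, z) ∈ P satisfies the inequality Σ_{i∈S} y_i + Σ_{i∈S̄} (D_{t_{ℓ(1)}} − D_{t_{i−1(1)}}) x_i + Σ_{j∈T̄} ᾱ_j z_j ≥ D_{t_{ℓ(1)}}. -/
noncomputable section

lemma cumD_zero (d : ℕ → ℕ → ℝ) (j : ℕ) : cumD d j 0 = 0 := by simp [cumD]

lemma cumD_nonneg {d : ℕ → ℕ → ℝ} {n : ℕ} {j t : ℕ} (ht : t ≤ n)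
    (hd : ∀ i ∈ Finset.Icc 1 n, 0 ≤ d j i) : 0 ≤ cumD d j t :=
  Finset.sum_nonneg fun i hi => hd i (Finset.Icc_subset_Icc_right ht hi)

lemma cumD_mono {d : ℕ → ℕ → ℝ} {n : ℕ} {j s t : ℕ} (hst : s ≤ t) (ht : t ≤ n)
    (hd : ∀ i ∈ Finset.Icc 1 n, 0 ≤ d j i) : cumD d j s ≤ cumD d j t :=
  Finset.sum_le_sum_of_subset_of_nonneg (Finset.Icc_subset_Icc_right hst)
    fun i hi _ => hd i (Finset.Icc_subset_Icc_right ht hi)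


lemma telescope_Icc (f : ℕ → ℝ) (N : ℕ) :
    ∑ p ∈ Finset.Icc 1 N, (f p - f (p+1)) = f 1 - f (N+1) := by
  induction N with
  | zero => simp
  | succ N ih => rw [Finset.sum_Icc_succ_top (by omega), ih]; ring

/-- The `k+1` argument: some scenario among the `k+1` largest has `z = 0`. -/
lemma Y_ge_kp1 (d : ℕ → ℕ → ℝ) (m k : ℕ) (hk : k < m)
    (σr : ℕ → ℕ) (r : ℕ)
    (hσbij : Set.BijOn σr (Set.Icc 1 m) (Set.Icc 1 m))
    (hσord : ∀ p q, 1 ≤ p → p ≤ q → q ≤ m → cumD d (σr q) r ≤ cumD d (σr p) r)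
    (y z : ℕ → ℝ)
    (hz : ∀ j ∈ Finset.Icc 1 m, z j = 0 ∨ z j = 1)
    (hcon : ∀ j ∈ Finset.Icc 1 m, cumD d j r * (1 - z j) ≤ ∑ i ∈ Finset.Icc 1 r, y i)
    (hzsum : ∑ j ∈ Finset.Icc 1 m, z j ≤ (k : ℝ)) :
    cumD d (σr (k+1)) r ≤ ∑ i ∈ Finset.Icc 1 r, y i := by
  have hsub : ∀ p ∈ Finset.Icc 1 (k+1), σr p ∈ Finset.Icc 1 m := by
    intro p hp
    simp only [Finset.mem_Icc] at hp ⊢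
    have := hσbij.mapsTo (Set.mem_Icc.2 ⟨hp.1, by omega⟩)
    simpa [Set.mem_Icc] using this
  obtain ⟨p, hp, hzp⟩ : ∃ p ∈ Finset.Icc 1 (k+1), z (σr p) = 0 := by
    by_contra h
    push_neg at h
    have hall : ∀ p ∈ Finset.Icc 1 (k+1), z (σr p) = 1 := by
      intro p hp
      rcases hz _ (hsub p hp) with h0 | h1
      · exact absurd h0 (h p hp)
      · exact h1
    have hinj : Set.InjOn σr (Finset.Icc 1 (k+1) : Finset ℕ) := by
      intro u hu v hv huv
      simp only [Finset.coe_Icc] at hu hv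
      exact hσbij.injOn (Set.Icc_subset_Icc_right (by omega) hu)
        (Set.Icc_subset_Icc_right (by omega) hv) huv
    have him : ∑ j ∈ (Finset.Icc 1 (k+1)).image σr, z j = (k+1 : ℝ) := by
      rw [Finset.sum_image (fun u hu v hv huv => hinj (by simpa using hu) (by simpa using hv) huv)]
      rw [Finset.sum_congr rfl hall]
      simp
    have hle : ∑ j ∈ (Finset.Icc 1 (k+1)).image σr, z j ≤ ∑ j ∈ Finset.Icc 1 m, z j := by
      apply Finset.sum_le_sum_of_subset_of_nonneg
      · intro j hj
        obtain ⟨p, hp, rfl⟩ := Finset.mem_image.1 hj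
        exact hsub p hp
      · intro j hj _
        rcases hz j hj with h | h <;> simp [h]
    rw [him] at hle
    have : (k+1 : ℝ) ≤ k := le_trans hle hzsum
    linarith
  have h1 : cumD d (σr (k+1)) r ≤ cumD d (σr p) r := by
    simp only [Finset.mem_Icc] at hp
    exact hσord p (k+1) hp.1 hp.2 (by omega)
  have h2 := hcon _ (hsub p hp)
  rw [hzp] at h2
  linarith

lemma mixing_valid_s2 (d : ℕ → ℕ → ℝ) (m k : ℕ) (hk : k < m)
    (σr τ1 : ℕ → ℕ) (a r : ℕ)
    (hσbij : Set.BijOn σr (Set.Icc 1 m) (Set.Icc 1 m))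
    (hσord : ∀ p q, 1 ≤ p → p ≤ q → q ≤ m → cumD d (σr q) r ≤ cumD d (σr p) r)
    (hmem : ∀ p ∈ Finset.Icc 1 a, τ1 p ∈ (Finset.Icc 1 k).image σr)
    (hord : ∀ p q, 1 ≤ p → p ≤ q → q ≤ a → cumD d (τ1 q) r ≤ cumD d (τ1 p) r)
    (hconv : τ1 (a+1) = σr (k+1))
    (y z : ℕ → ℝ)
    (hz : ∀ j ∈ Finset.Icc 1 m, z j = 0 ∨ z j = 1)
    (hcon : ∀ j ∈ Finset.Icc 1 m, cumD d j r * (1 - z j) ≤ ∑ i ∈ Finset.Icc 1 r, y i)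
    (hzsum : ∑ j ∈ Finset.Icc 1 m, z j ≤ (k : ℝ)) :
    cumD d (τ1 1) r ≤ (∑ i ∈ Finset.Icc 1 r, y i) +
      ∑ p ∈ Finset.Icc 1 a, (cumD d (τ1 p) r - cumD d (τ1 (p+1)) r) * z (τ1 p) := by
  have hτm : ∀ p ∈ Finset.Icc 1 a, τ1 p ∈ Finset.Icc 1 m := by
    intro p hp
    obtain ⟨q, hq, hτq⟩ := Finset.mem_image.1 (hmem p hp)
    rw [← hτq]
    simp only [Finset.mem_Icc] at hq ⊢
    have := hσbij.mapsTo (Set.mem_Icc.2 ⟨hq.1, by omega⟩)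
    simpa [Set.mem_Icc] using this
  have hdiff : ∀ p, 1 ≤ p → p ≤ a → cumD d (τ1 (p+1)) r ≤ cumD d (τ1 p) r := by
    intro p h1p hpa
    rcases eq_or_lt_of_le hpa with rfl | hlt
    · rw [hconv]
      obtain ⟨q, hq, hτq⟩ := Finset.mem_image.1 (hmem p (by simp [Finset.mem_Icc]; omega))
      rw [← hτq]
      simp only [Finset.mem_Icc] at hq
      exact hσord q (k+1) hq.1 (by omega) (by omega)
    · exact hord p (p+1) h1p (by omega) (by omega)
  have hYk := Y_ge_kp1 d m k hk σr r hσbij hσord y z hz hcon hzsum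
  set Q := (Finset.Icc 1 a).filter (fun p => z (τ1 p) = 0) with hQ
  by_cases hQne : Q.Nonempty
  · set q := Q.min' hQne with hq
    have hqQ : q ∈ Q := Finset.min'_mem _ _
    have hqa : q ∈ Finset.Icc 1 a := (Finset.mem_filter.1 hqQ).1
    have hzq : z (τ1 q) = 0 := (Finset.mem_filter.1 hqQ).2
    simp only [Finset.mem_Icc] at hqa
    have hmin : ∀ p ∈ Finset.Icc 1 a, p < q → z (τ1 p) = 1 := by
      intro p hp hpq
      rcases hz _ (hτm p hp) with h0 | h1
      · exact absurd (Finset.min'_le Q p (Finset.mem_filter.2 ⟨hp, h0⟩)) (by omega)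
      · exact h1
    -- split the sum
    have hsplit : ∑ p ∈ Finset.Icc 1 a, (cumD d (τ1 p) r - cumD d (τ1 (p+1)) r) * z (τ1 p)
        ≥ ∑ p ∈ Finset.Icc 1 (q-1), (cumD d (τ1 p) r - cumD d (τ1 (p+1)) r) * z (τ1 p) := by
      apply Finset.sum_le_sum_of_subset_of_nonneg
      · exact Finset.Icc_subset_Icc_right (by omega)
      · intro p hp _
        simp only [Finset.mem_Icc] at hp
        have hd := hdiff p hp.1 hp.2
        have hz0 : 0 ≤ z (τ1 p) := by
          rcases hz _ (hτm p (by simp [Finset.mem_Icc]; omega)) with h | h <;>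
            simp [h]
        nlinarith
    have hfirst : ∑ p ∈ Finset.Icc 1 (q-1), (cumD d (τ1 p) r - cumD d (τ1 (p+1)) r) * z (τ1 p)
        = cumD d (τ1 1) r - cumD d (τ1 q) r := by
      have : ∀ p ∈ Finset.Icc 1 (q-1), (cumD d (τ1 p) r - cumD d (τ1 (p+1)) r) * z (τ1 p)
          = cumD d (τ1 p) r - cumD d (τ1 (p+1)) r := by
        intro p hp
        simp only [Finset.mem_Icc] at hp
        rw [hmin p (by simp [Finset.mem_Icc]; omega) (by omega), mul_one]
      rw [Finset.sum_congr rfl this, telescope_Icc (fun p => cumD d (τ1 p) r) (q-1)]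
      have : q - 1 + 1 = q := by omega
      rw [this]
    have hYq : cumD d (τ1 q) r ≤ ∑ i ∈ Finset.Icc 1 r, y i := by
      have h2 := hcon _ (hτm q (by simp [Finset.mem_Icc]; omega))
      rw [hzq] at h2
      linarith
    linarith [hsplit, hfirst.symm.le, hfirst.le]
  · -- all z = 1 on T
    have hall : ∀ p ∈ Finset.Icc 1 a, z (τ1 p) = 1 := by
      intro p hp
      rcases hz _ (hτm p hp) with h0 | h1
      · exact absurd ⟨p, Finset.mem_filter.2 ⟨hp, h0⟩⟩ hQne
      · exact h1
    have hsum : ∑ p ∈ Finset.Icc 1 a, (cumD d (τ1 p) r - cumD d (τ1 (p+1)) r) * z (τ1 p)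
        = cumD d (τ1 1) r - cumD d (σr (k+1)) r := by
      have : ∀ p ∈ Finset.Icc 1 a, (cumD d (τ1 p) r - cumD d (τ1 (p+1)) r) * z (τ1 p)
          = cumD d (τ1 p) r - cumD d (τ1 (p+1)) r := fun p hp => by rw [hall p hp, mul_one]
      rw [Finset.sum_congr rfl this, telescope_Icc (fun p => cumD d (τ1 p) r) a, hconv]
    rw [hsum]
    linarith

/-- `α_{j(i')}`: if `j = τ i' p = t_{i'(p)} ∈ T_{i'}` for some `p ∈ {1,…,a i'}` then
`D_{t_{i'(p)}} - D_{t_{i'(p+1)}}` (cumulative demands at period `i'`), and `0` otherwise.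
(The filtered sum has at most one term since `τ i'` is injective on `{1,…,a i'}`.) -/
def alphaCoef (d : ℕ → ℕ → ℝ) (a : ℕ → ℕ) (τ : ℕ → ℕ → ℕ) (i' j : ℕ) : ℝ :=
  ∑ p ∈ (Finset.Icc 1 (a i')).filter (fun p => τ i' p = j),
    (cumD d (τ i' p) i' - cumD d (τ i' (p + 1)) i')

/-- `ᾱ_j = max { max_{i ∈ S̄} α_{j(i-1)}, α_{j ℓ} }` (the index `ℓ + 1` contributes `α_{j ℓ}`). -/
def alphaBar (d : ℕ → ℕ → ℝ) (a : ℕ → ℕ) (τ : ℕ → ℕ → ℕ) (ℓ : ℕ) (Sbar : Finset ℕ)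
    (j : ℕ) : ℝ :=
  (insert (ℓ + 1) Sbar).sup' (Finset.insert_nonempty _ _) fun i => alphaCoef d a τ (i - 1) j

/-- validity of the new inequalities (2.7).
For each `i ∈ (S̄ \ {1}) ∪ {ℓ+1}`, `τ (i-1)` lists the chosen subset
`T_{i-1} = {t_{i-1(1)},…,t_{i-1(a_{i-1})}} ⊆ T*_{i-1}` in nonincreasing order of cumulative
demand at period `i-1`, with the convention `τ (i-1) (a_{i-1} + 1) = σ_{i-1(k+1)}`;
`t_{ℓ(1)} = σ_{ℓ(1)}`; if `1 ∈ S̄` then `T_0 = ∅` (and `D_{t_{0(1)}} = cumD d _ 0 = 0`). -/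
theorem new_valid_inequality (n m k : ℕ) (hn : 1 ≤ n) (hm : 1 ≤ m) (hk : k < m)
    (d : ℕ → ℕ → ℝ)
    (hd : ∀ j ∈ Finset.Icc 1 m, ∀ i ∈ Finset.Icc 1 n, 0 ≤ d j i)
    (σ : ℕ → ℕ → ℕ)
    (hσbij : ∀ i ∈ Finset.Icc 1 n, Set.BijOn (σ i) (Set.Icc 1 m) (Set.Icc 1 m))
    (hσord : ∀ i ∈ Finset.Icc 1 n, ∀ p q, 1 ≤ p → p ≤ q → q ≤ m →
      cumD d (σ i q) i ≤ cumD d (σ i p) i)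
    (ℓ : ℕ) (hℓ : ℓ ∈ Finset.Icc 1 n)
    (S : Finset ℕ) (hS : S ⊆ Finset.Icc 1 ℓ)
    (a : ℕ → ℕ) (τ : ℕ → ℕ → ℕ)
    (hT : ∀ i ∈ insert (ℓ + 1) ((Finset.Icc 1 ℓ \ S) \ {1}),
      (∀ p ∈ Finset.Icc 1 (a (i - 1)), τ (i - 1) p ∈ (Finset.Icc 1 k).image (σ (i - 1))) ∧
      Set.InjOn (τ (i - 1)) (Set.Icc 1 (a (i - 1))) ∧
      (∀ p q, 1 ≤ p → p ≤ q → q ≤ a (i - 1) →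
        cumD d (τ (i - 1) q) (i - 1) ≤ cumD d (τ (i - 1) p) (i - 1)) ∧
      τ (i - 1) (a (i - 1) + 1) = σ (i - 1) (k + 1))
    (haℓ : 1 ≤ a ℓ) (hτℓ : τ ℓ 1 = σ ℓ 1)
    (hT0 : 1 ∈ Finset.Icc 1 ℓ \ S → a 0 = 0)
    (x y z : ℕ → ℝ) (hP : memP d n m k x y z) :
    cumD d (τ ℓ 1) ℓ ≤
      ∑ i ∈ S, y i +
      ∑ i ∈ Finset.Icc 1 ℓ \ S,
        (cumD d (τ ℓ 1) ℓ - cumD d (τ (i - 1) 1) (i - 1)) * x i +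
      ∑ j ∈ (insert (ℓ + 1) (Finset.Icc 1 ℓ \ S)).biUnion
          (fun i => (Finset.Icc 1 (a (i - 1))).image (τ (i - 1))),
        alphaBar d a τ ℓ (Finset.Icc 1 ℓ \ S) j * z j := by
  obtain ⟨hx, hy0, hz, hcon, hzsum, hxy⟩ := hP
  simp only [Finset.mem_Icc] at hℓ
  obtain ⟨hℓ1, hℓn⟩ := hℓ
  set Sbar := Finset.Icc 1 ℓ \ S with hSbarDef
  set Tbar := (insert (ℓ + 1) Sbar).biUnion
      (fun i => (Finset.Icc 1 (a (i - 1))).image (τ (i - 1))) with hTbarDef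
  set Dst := cumD d (τ ℓ 1) ℓ with hDstDef
  -- basic facts
  have hSbar_mem : ∀ i ∈ Sbar, 1 ≤ i ∧ i ≤ ℓ := by
    intro i hi
    have := (Finset.mem_sdiff.1 hi).1
    simpa [Finset.mem_Icc] using this
  have hy_zero : ∀ p ∈ Finset.Icc 1 n, x p = 0 → y p = 0 := by
    intro p hp hxp
    have h1 := hxy p hp
    rw [hxp, mul_zero] at h1
    exact le_antisymm h1 (hy0 p hp)
  have hx_nn : ∀ p ∈ Finset.Icc 1 n, 0 ≤ x p := by
    intro p hp; rcases hx p hp with h | h <;> simp [h]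
  have hz0 : ∀ j ∈ Finset.Icc 1 m, 0 ≤ z j := by
    intro j hj; rcases hz j hj with h | h <;> simp [h]
  have hσm : ∀ i ∈ Finset.Icc 1 n, ∀ p, 1 ≤ p → p ≤ m → σ i p ∈ Finset.Icc 1 m := by
    intro i hi p h1 h2
    have := (hσbij i hi).mapsTo (Set.mem_Icc.2 ⟨h1, h2⟩)
    simpa [Finset.mem_Icc, Set.mem_Icc] using this
  have hprops : ∀ i ∈ insert (ℓ + 1) Sbar, i ≠ 1 →
      (∀ p ∈ Finset.Icc 1 (a (i - 1)), τ (i - 1) p ∈ (Finset.Icc 1 k).image (σ (i - 1))) ∧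
      Set.InjOn (τ (i - 1)) (Set.Icc 1 (a (i - 1))) ∧
      (∀ p q, 1 ≤ p → p ≤ q → q ≤ a (i - 1) →
        cumD d (τ (i - 1) q) (i - 1) ≤ cumD d (τ (i - 1) p) (i - 1)) ∧
      τ (i - 1) (a (i - 1) + 1) = σ (i - 1) (k + 1) := by
    intro i hi h1
    apply hT
    rcases Finset.mem_insert.1 hi with rfl | hi'
    · exact Finset.mem_insert_self _ _
    · exact Finset.mem_insert_of_mem (Finset.mem_sdiff.2 ⟨hi', by simpa using h1⟩)
  have hrange : ∀ i ∈ insert (ℓ + 1) Sbar, i ≠ 1 → 1 ≤ i - 1 ∧ i - 1 ≤ ℓ := by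
    intro i hi h1
    rcases Finset.mem_insert.1 hi with rfl | hi'
    · omega
    · have := hSbar_mem i hi'; omega
  have hτm : ∀ i ∈ insert (ℓ + 1) Sbar, ∀ p ∈ Finset.Icc 1 (a (i - 1)),
      τ (i - 1) p ∈ Finset.Icc 1 m := by
    intro i hi p hp
    by_cases h1 : i = 1
    · subst h1
      have ha0 : a 0 = 0 := hT0 (by
        rcases Finset.mem_insert.1 hi with h | h
        · omega
        · exact h)
      simp only [Nat.sub_self] at hp ⊢
      rw [ha0] at hp
      simp at hp
    · obtain ⟨hmem, _, _, _⟩ := hprops i hi h1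
      obtain ⟨q, hq, hτq⟩ := Finset.mem_image.1 (hmem p hp)
      rw [← hτq]
      simp only [Finset.mem_Icc] at hq
      have hr := hrange i hi h1
      exact hσm (i - 1) (by simp [Finset.mem_Icc]; omega) q hq.1 (by omega)
  have hTm : ∀ j ∈ Tbar, j ∈ Finset.Icc 1 m := by
    intro j hj
    obtain ⟨i, hi, hj'⟩ := Finset.mem_biUnion.1 hj
    obtain ⟨p, hp, hτp⟩ := Finset.mem_image.1 hj'
    rw [← hτp]
    exact hτm i hi p hp
  have hdiffAll : ∀ i ∈ insert (ℓ + 1) Sbar, ∀ p, 1 ≤ p → p ≤ a (i - 1) →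
      cumD d (τ (i - 1) (p + 1)) (i - 1) ≤ cumD d (τ (i - 1) p) (i - 1) := by
    intro i hi p h1p hpa
    by_cases h1 : i = 1
    · subst h1
      have ha0 : a 0 = 0 := hT0 (by
        rcases Finset.mem_insert.1 hi with h | h
        · exact absurd h (by omega)
        · exact h)
      simp only [Nat.sub_self, ha0] at hpa
      exact absurd h1p (by omega)
    · obtain ⟨hmem, _, hord, hconv⟩ := hprops i hi h1
      have hr := hrange i hi h1
      have hin : i - 1 ∈ Finset.Icc 1 n := by simp [Finset.mem_Icc]; omega
      rcases eq_or_lt_of_le hpa with heq | hlt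
      · rw [← heq] at hconv
        rw [hconv]
        obtain ⟨q, hq, hτq⟩ := Finset.mem_image.1 (hmem p (by simp [Finset.mem_Icc]; omega))
        rw [← hτq]
        simp only [Finset.mem_Icc] at hq
        exact hσord (i - 1) hin q (k + 1) hq.1 (by omega) (by omega)
      · exact hord p (p + 1) h1p (by omega) (by omega)
  have hαnn : ∀ i ∈ insert (ℓ + 1) Sbar, ∀ j, 0 ≤ alphaCoef d a τ (i - 1) j := by
    intro i hi j
    apply Finset.sum_nonneg
    intro p hp
    have hp' := (Finset.mem_filter.1 hp).1
    simp only [Finset.mem_Icc] at hp'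
    exact sub_nonneg.2 (hdiffAll i hi p hp'.1 hp'.2)
  have hbar_nn : ∀ j, 0 ≤ alphaBar d a τ ℓ Sbar j := by
    intro j
    have h1 : alphaCoef d a τ ((ℓ + 1) - 1) j ≤ alphaBar d a τ ℓ Sbar j :=
      Finset.le_sup' (fun i => alphaCoef d a τ (i - 1) j) (Finset.mem_insert_self _ _)
    have h2 := hαnn (ℓ + 1) (Finset.mem_insert_self _ _) j
    linarith
  have htz_nn : ∀ j ∈ Tbar, 0 ≤ alphaBar d a τ ℓ Sbar j * z j := fun j hj =>
    mul_nonneg (hbar_nn j) (hz0 j (hTm j hj))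
  have hτℓm : τ ℓ 1 ∈ Finset.Icc 1 m := by
    have h1 := hτm (ℓ + 1) (Finset.mem_insert_self _ _) 1 (by
      simp only [Nat.add_sub_cancel, Finset.mem_Icc]; omega)
    simpa only [Nat.add_sub_cancel] using h1
  have hDstar : ∀ j' ∈ Finset.Icc 1 m, ∀ t, t ≤ ℓ → cumD d j' t ≤ Dst := by
    intro j' hj' t ht
    have hdj' : ∀ i ∈ Finset.Icc 1 n, 0 ≤ d j' i := hd j' hj'
    have h1 : cumD d j' t ≤ cumD d j' ℓ := cumD_mono ht hℓn hdj'
    obtain ⟨q, hq, hσq⟩ := (hσbij ℓ (by simp [Finset.mem_Icc]; omega)).surjOn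
      (by simpa [Set.mem_Icc, Finset.mem_Icc] using hj' : j' ∈ Set.Icc 1 m)
    simp only [Set.mem_Icc] at hq
    have h2 : cumD d (σ ℓ q) ℓ ≤ cumD d (σ ℓ 1) ℓ :=
      hσord ℓ (by simp [Finset.mem_Icc]; omega) 1 q le_rfl hq.1 hq.2
    rw [hσq] at h2
    rw [hDstDef, hτℓ]
    linarith
  have hDst_nn : 0 ≤ Dst := by
    have := cumD_nonneg (n := n) (Nat.zero_le n) (hd (τ ℓ 1) hτℓm)
    calc (0:ℝ) = cumD d (τ ℓ 1) 0 := (cumD_zero d _).symm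
      _ ≤ Dst := hDstar (τ ℓ 1) hτℓm 0 (by omega)
  have hc : ∀ i ∈ insert (ℓ + 1) Sbar, cumD d (τ (i - 1) 1) (i - 1) ≤ Dst := by
    intro i hi
    by_cases h1 : i = 1
    · subst h1
      simp only [Nat.sub_self]
      rw [cumD_zero]
      exact hDst_nn
    · have hr := hrange i hi h1
      have hτ1m : τ (i - 1) 1 ∈ Finset.Icc 1 m := by
        by_cases ha0 : a (i - 1) = 0
        · obtain ⟨_, _, _, hconv⟩ := hprops i hi h1
          rw [ha0, zero_add] at hconv
          rw [hconv]
          exact hσm (i - 1) (by simp [Finset.mem_Icc]; omega) (k + 1) (by omega) (by omega)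
        · exact hτm i hi 1 (by simp [Finset.mem_Icc]; omega)
      exact hDstar _ hτ1m (i - 1) hr.2
  -- the key claim
  have key : ∀ isel ∈ insert (ℓ + 1) Sbar,
      (∀ p ∈ Finset.Icc 1 (isel - 1), p ∉ S → x p = 0) →
      cumD d (τ (isel - 1) 1) (isel - 1) ≤
        (∑ i ∈ S, y i) + ∑ j ∈ Tbar, alphaBar d a τ ℓ Sbar j * z j := by
    intro isel hisel h0
    have hSy_nn : 0 ≤ ∑ i ∈ S, y i :=
      Finset.sum_nonneg fun i hi => hy0 i (Finset.Icc_subset_Icc_right hℓn (hS hi))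
    have hTz_nn : 0 ≤ ∑ j ∈ Tbar, alphaBar d a τ ℓ Sbar j * z j :=
      Finset.sum_nonneg htz_nn
    by_cases h1 : isel = 1
    · subst h1
      simp only [Nat.sub_self]
      rw [cumD_zero]
      linarith
    · have hr := hrange isel hisel h1
      obtain ⟨hmem, hinj, hord, hconv⟩ := hprops isel hisel h1
      set r := isel - 1 with hrdef
      have hrn : r ∈ Finset.Icc 1 n := by simp [Finset.mem_Icc]; omega
      -- step (a): partial y-sum bounded by S-sum
      have hstepa : ∑ p ∈ Finset.Icc 1 r, y p ≤ ∑ i ∈ S, y i := by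
        have hsplit := Finset.sum_filter_add_sum_filter_not (Finset.Icc 1 r) (· ∈ S) y
        have hzero : ∑ p ∈ (Finset.Icc 1 r).filter (fun p => ¬ p ∈ S), y p = 0 := by
          apply Finset.sum_eq_zero
          intro p hp
          obtain ⟨hp1, hp2⟩ := Finset.mem_filter.1 hp
          have hpn : p ∈ Finset.Icc 1 n := by
            simp only [Finset.mem_Icc] at hp1 ⊢; omega
          exact hy_zero p hpn (h0 p hp1 hp2)
        have hsub : ∑ p ∈ (Finset.Icc 1 r).filter (· ∈ S), y p ≤ ∑ i ∈ S, y i := by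
          apply Finset.sum_le_sum_of_subset_of_nonneg
          · intro p hp; exact (Finset.mem_filter.1 hp).2
          · intro i hi _
            exact hy0 i (Finset.Icc_subset_Icc_right hℓn (hS hi))
        linarith
      -- step (c): mixing-sum bounded by the Tbar sum
      have hinj' : ∀ u ∈ Finset.Icc 1 (a r), ∀ v ∈ Finset.Icc 1 (a r),
          τ r u = τ r v → u = v := by
        intro u hu v hv huv
        exact hinj (by simpa [Set.mem_Icc, Finset.mem_Icc] using hu)
          (by simpa [Set.mem_Icc, Finset.mem_Icc] using hv) huv
      have hcol : ∀ p ∈ Finset.Icc 1 (a r),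
          alphaCoef d a τ r (τ r p) = cumD d (τ r p) r - cumD d (τ r (p + 1)) r := by
        intro p hp
        have hfil : (Finset.Icc 1 (a r)).filter (fun p' => τ r p' = τ r p) = {p} := by
          ext q
          simp only [Finset.mem_filter, Finset.mem_singleton]
          constructor
          · rintro ⟨hq1, hq2⟩; exact hinj' q hq1 p hp hq2
          · rintro rfl; exact ⟨hp, rfl⟩
        rw [alphaCoef, hfil, Finset.sum_singleton]
      have hstepc : ∑ p ∈ Finset.Icc 1 (a r), (cumD d (τ r p) r - cumD d (τ r (p + 1)) r) * z (τ r p)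
          ≤ ∑ j ∈ Tbar, alphaBar d a τ ℓ Sbar j * z j := by
        calc ∑ p ∈ Finset.Icc 1 (a r), (cumD d (τ r p) r - cumD d (τ r (p + 1)) r) * z (τ r p)
            = ∑ p ∈ Finset.Icc 1 (a r), alphaCoef d a τ r (τ r p) * z (τ r p) := by
              refine Finset.sum_congr rfl fun p hp => ?_
              rw [hcol p hp]
          _ = ∑ j ∈ (Finset.Icc 1 (a r)).image (τ r), alphaCoef d a τ r j * z j := by
              rw [Finset.sum_image hinj']
          _ ≤ ∑ j ∈ (Finset.Icc 1 (a r)).image (τ r), alphaBar d a τ ℓ Sbar j * z j := by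
              apply Finset.sum_le_sum
              intro j hj
              apply mul_le_mul_of_nonneg_right
              · exact Finset.le_sup' (fun i => alphaCoef d a τ (i - 1) j) hisel
              · obtain ⟨p, hp, hτp⟩ := Finset.mem_image.1 hj
                rw [← hτp]
                exact hz0 _ (hτm isel hisel p hp)
          _ ≤ ∑ j ∈ Tbar, alphaBar d a τ ℓ Sbar j * z j := by
              apply Finset.sum_le_sum_of_subset_of_nonneg
              · rw [hTbarDef, hrdef]
                exact Finset.subset_biUnion_of_mem
                  (fun i => (Finset.Icc 1 (a (i - 1))).image (τ (i - 1))) hisel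
              · intro j hj _
                exact htz_nn j hj
      -- mixing inequality
      have hmix := mixing_valid_s2 d m k hk (σ r) (τ r) (a r) r (hσbij r hrn)
        (fun p q h1 h2 h3 => hσord r hrn p q h1 h2 h3) hmem hord hconv y z hz
        (fun j hj => hcon r hrn j hj) hzsum
      linarith
  -- case analysis on x over Sbar
  by_cases hex : ∃ i ∈ Sbar, x i = 1
  · set F := Sbar.filter (fun i => x i = 1) with hFdef
    have hFne : F.Nonempty := by
      obtain ⟨i, hi, hxi⟩ := hex
      exact ⟨i, Finset.mem_filter.2 ⟨hi, hxi⟩⟩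
    set istar := F.min' hFne with histardef
    have histarF : istar ∈ F := Finset.min'_mem _ _
    obtain ⟨histarS, hxistar⟩ := Finset.mem_filter.1 histarF
    have histar_rng := hSbar_mem istar histarS
    have histar_m : istar ∈ insert (ℓ + 1) Sbar := Finset.mem_insert_of_mem histarS
    have hk1 := key istar histar_m (by
      intro p hp hpS
      simp only [Finset.mem_Icc] at hp
      have hpSbar : p ∈ Sbar := Finset.mem_sdiff.2
        ⟨by simp [Finset.mem_Icc]; omega, hpS⟩
      have hpF : p ∉ F := by
        intro hpF
        have := Finset.min'_le F p hpF
        omega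
      have hx01 := hx p (by simp [Finset.mem_Icc]; omega)
      rcases hx01 with h | h
      · exact h
      · exact absurd (Finset.mem_filter.2 ⟨hpSbar, h⟩) hpF)
    have hxsum : Dst - cumD d (τ (istar - 1) 1) (istar - 1) ≤
        ∑ i ∈ Sbar, (Dst - cumD d (τ (i - 1) 1) (i - 1)) * x i := by
      have hsingle := Finset.single_le_sum
        (f := fun i => (Dst - cumD d (τ (i - 1) 1) (i - 1)) * x i)
        (fun i hi => mul_nonneg (sub_nonneg.2 (hc i (Finset.mem_insert_of_mem hi)))
          (hx_nn i (by have := hSbar_mem i hi; simp [Finset.mem_Icc]; omega)))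
        histarS
      have hsingle' : (Dst - cumD d (τ (istar - 1) 1) (istar - 1)) * x istar ≤
          ∑ i ∈ Sbar, (Dst - cumD d (τ (i - 1) 1) (i - 1)) * x i := hsingle
      rw [hxistar, mul_one] at hsingle'
      exact hsingle'
    linarith
  · push_neg at hex
    have hk1 := key (ℓ + 1) (Finset.mem_insert_self _ _) (by
      intro p hp hpS
      simp only [Nat.add_sub_cancel, Finset.mem_Icc] at hp
      have hpSbar : p ∈ Sbar := Finset.mem_sdiff.2 ⟨by simp [Finset.mem_Icc]; omega, hpS⟩
      rcases hx p (by simp [Finset.mem_Icc]; omega) with h | h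
      · exact h
      · exact absurd h (hex p hpSbar))
    simp only [Nat.add_sub_cancel] at hk1
    have hxsum : 0 ≤ ∑ i ∈ Sbar, (Dst - cumD d (τ (i - 1) 1) (i - 1)) * x i :=
      Finset.sum_nonneg fun i hi => mul_nonneg
        (sub_nonneg.2 (hc i (Finset.mem_insert_of_mem hi)))
        (hx_nn i (by have := hSbar_mem i hi; simp [Finset.mem_Icc]; omega))
    linarith


end
end

section
/- Let ℓ < n and suppose D_{σ_{ℓ+1(k+1)}} ≥ D_{σ_{ℓ(1)}}. Let T_ℓ = {t_{ℓ(1)},…,t_{ℓ(a)}} ⊆ T*_ℓ be ordered so that D_{t_{ℓ(1)}} ≥ … ≥ D_{t_{ℓ(a)}}, with t_{ℓ(1)} = σ_{ℓ(1)} and t_{ℓ(a+1)} := σ_{ℓ(k+1)}. Then every (x, y, z) ∈ ℝ^n × ℝ^n × ℝ^m with 0 ≤ x_{ℓ+1} ≤ 1 that satisfies Σ_{i=1}^{ℓ} y_i + Σ_{j=1}^{a} (D_{t_{ℓ(j)}} − D_{t_{ℓ(j+1)}}) z_{t_{ℓ(j)}} ≥ D_{σ_{ℓ+1(k+1)}}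 − (D_{σ_{ℓ+1(k+1)}} − D_{σ_{ℓ(1)}}) x_{ℓ+1} also satisfies the basic mixing inequality Σ_{i=1}^{ℓ} y_i + Σ_{j=1}^{a} (D_{t_{ℓ(j)}} − D_{t_{ℓ(j+1)}}) z_{t_{ℓ(j)}} ≥ D_{t_{ℓ(1)}}; that is, under this condition the former inequality dominates the mixing inequality. -/
noncomputable section

/-- if `D_{σ_{ℓ+1(k+1)}} ≥ D_{σ_{ℓ(1)}}`, then inequality (2.8)
(instance of the new inequalities with `S̄ = {ℓ+1}` and `T_{ℓ+1} = ∅`) dominates the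
basic mixing inequality for period `ℓ`: any point with `0 ≤ x_{ℓ+1} ≤ 1` satisfying
(2.8) also satisfies the mixing inequality. -/
theorem dominates_mixing (n m k : ℕ) (hn : 1 ≤ n) (hm : 1 ≤ m) (hk : k < m)
    (d : ℕ → ℕ → ℝ)
    (hd : ∀ j ∈ Finset.Icc 1 m, ∀ i ∈ Finset.Icc 1 n, 0 ≤ d j i)
    (σ : ℕ → ℕ → ℕ)
    (hσbij : ∀ i ∈ Finset.Icc 1 n, Set.BijOn (σ i) (Set.Icc 1 m) (Set.Icc 1 m))
    (hσord : ∀ i ∈ Finset.Icc 1 n, ∀ p q, 1 ≤ p → p ≤ q → q ≤ m →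
      cumD d (σ i q) i ≤ cumD d (σ i p) i)
    (ℓ : ℕ) (hℓ1 : 1 ≤ ℓ) (hℓn : ℓ < n)
    (hD : cumD d (σ ℓ 1) ℓ ≤ cumD d (σ (ℓ + 1) (k + 1)) (ℓ + 1))
    (a : ℕ) (ha : 1 ≤ a) (τ : ℕ → ℕ)
    (hτmem : ∀ p ∈ Finset.Icc 1 a, τ p ∈ (Finset.Icc 1 k).image (σ ℓ))
    (hτinj : Set.InjOn τ (Set.Icc 1 a))
    (hτord : ∀ p q, 1 ≤ p → p ≤ q → q ≤ a → cumD d (τ q) ℓ ≤ cumD d (τ p) ℓ)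
    (hτ1 : τ 1 = σ ℓ 1)
    (hτconv : τ (a + 1) = σ ℓ (k + 1))
    (x y z : ℕ → ℝ) (hx0 : 0 ≤ x (ℓ + 1)) (hx1 : x (ℓ + 1) ≤ 1)
    (hineq : cumD d (σ (ℓ + 1) (k + 1)) (ℓ + 1) -
        (cumD d (σ (ℓ + 1) (k + 1)) (ℓ + 1) - cumD d (σ ℓ 1) ℓ) * x (ℓ + 1) ≤
      ∑ i ∈ Finset.Icc 1 ℓ, y i +
      ∑ p ∈ Finset.Icc 1 a, (cumD d (τ p) ℓ - cumD d (τ (p + 1)) ℓ) * z (τ p)) :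
    cumD d (τ 1) ℓ ≤
      ∑ i ∈ Finset.Icc 1 ℓ, y i +
      ∑ p ∈ Finset.Icc 1 a, (cumD d (τ p) ℓ - cumD d (τ (p + 1)) ℓ) * z (τ p) := by
  rw [hτ1]
  nlinarith [mul_nonneg (sub_nonneg.mpr hD) (sub_nonneg.mpr hx1)]

end
end

section
/- Fix i ∈ N, a real number Y, and a real number Θ′ satisfying Θ′ ≥ (m − q)·Y − Σ_{p=1}^{m−q} D_{σ̄_{i(p)}} for every q ∈ {0,1,…,k}. Then for every q ∈ {0,1,…,k} and every subset R ⊆ Ω with |R| = m − q, one has Θ′ ≥ (m − q)·Y − Σ_{j∈R} D_{ji}; that is, the k+1 inequalities built from sorted cumulative demands imply the entire exponential family of inequalities indexed by subsets R. -/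
noncomputable section

lemma key_sorted_sum (m c : ℕ) (g : ℕ → ℝ)
    (hmono : ∀ p q, 1 ≤ p → p ≤ q → q ≤ m → g p ≤ g q)
    (T : Finset ℕ) (hT : T ⊆ Finset.Icc 1 m) (hcard : T.card = c) :
    ∑ p ∈ Finset.Icc 1 c, g p ≤ ∑ p ∈ T, g p := by
  set e := T.orderEmbOfFin hcard with he
  have hmem : ∀ p : Fin c, e p ∈ Finset.Icc 1 m := fun p => hT (T.orderEmbOfFin_mem hcard p)
  have hle : ∀ j (h : j < c), j + 1 ≤ e ⟨j, h⟩ := by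
    intro j
    induction j with
    | zero => intro h; exact (Finset.mem_Icc.mp (hmem ⟨0, h⟩)).1
    | succ j ih =>
      intro h
      have h' : j < c := Nat.lt_of_succ_lt h
      have := e.strictMono (show (⟨j, h'⟩ : Fin c) < ⟨j+1, h⟩ from by simp)
      have := ih h'
      omega
  have hsum : ∑ p ∈ T, g p = ∑ p : Fin c, g (e p) := by
    refine (Finset.sum_bij (fun (p : Fin c) _ => e p) (fun p _ => T.orderEmbOfFin_mem hcard p)
      (fun a _ b _ hab => e.injective hab) ?_ (fun _ _ => rfl)).symm
    intro x hx
    have : x ∈ Set.range e := by rw [Finset.range_orderEmbOfFin]; exact hx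
    obtain ⟨p, hp⟩ := this
    exact ⟨p, Finset.mem_univ p, hp⟩
  have hsum2 : ∑ p ∈ Finset.Icc 1 c, g p = ∑ p : Fin c, g (p.1 + 1) := by
    rw [show Finset.Icc 1 c = Finset.Ico 1 (c+1) from by rw [Finset.Ico_add_one_right_eq_Icc],
      Finset.sum_Ico_eq_sum_range]
    simp only [Nat.add_sub_cancel]
    rw [← Fin.sum_univ_eq_sum_range (fun j => g (1 + j))]
    exact Finset.sum_congr rfl (fun p _ => by rw [Nat.add_comm])
  rw [hsum, hsum2]
  refine Finset.sum_le_sum (fun p _ => ?_)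
  exact hmono (p.1 + 1) (e p) (Nat.le_add_left 1 p.1) (hle p.1 p.2)
    (Finset.mem_Icc.mp (hmem p)).2

/-- the `k+1` inequalities built from the sorted cumulative demands imply the
entire exponential family indexed by subsets `R ⊆ Ω` with `|R| = m - q`, `q ∈ {0,…,k}`.
Here `σb i` sorts cumulative demands through period `i` in nondecreasing order. -/
theorem sorted_implies_subset_ineq (n m k : ℕ) (hn : 1 ≤ n) (hm : 1 ≤ m) (hk : k < m)
    (d : ℕ → ℕ → ℝ)
    (hd : ∀ j ∈ Finset.Icc 1 m, ∀ i ∈ Finset.Icc 1 n, 0 ≤ d j i)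
    (σb : ℕ → ℕ → ℕ)
    (hσbij : ∀ i ∈ Finset.Icc 1 n, Set.BijOn (σb i) (Set.Icc 1 m) (Set.Icc 1 m))
    (hσord : ∀ i ∈ Finset.Icc 1 n, ∀ p q, 1 ≤ p → p ≤ q → q ≤ m →
      cumD d (σb i p) i ≤ cumD d (σb i q) i)
    (i : ℕ) (hi : i ∈ Finset.Icc 1 n)
    (Y Θ : ℝ)
    (hΘ : ∀ q ≤ k,
      ((m : ℝ) - (q : ℝ)) * Y - ∑ p ∈ Finset.Icc 1 (m - q), cumD d (σb i p) i ≤ Θ) :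
    ∀ q ≤ k, ∀ R ⊆ Finset.Icc 1 m, R.card = m - q →
      ((m : ℝ) - (q : ℝ)) * Y - ∑ j ∈ R, cumD d j i ≤ Θ := by
  intro q hq R hR hRcard
  have hbij := hσbij i hi
  set T : Finset ℕ := (Finset.Icc 1 m).filter (fun p => σb i p ∈ R) with hTdef
  have hTsub : T ⊆ Finset.Icc 1 m := Finset.filter_subset _ _
  have hinj : Set.InjOn (σb i) (Set.Icc 1 m) := hbij.injOn
  have himg : Finset.image (σb i) T = R := by
    apply Finset.Subset.antisymm
    · intro x hx
      obtain ⟨p, hp, rfl⟩ := Finset.mem_image.mp hx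
      exact (Finset.mem_filter.mp hp).2
    · intro r hr
      have hr' : r ∈ Set.Icc 1 m := by
        have := hR hr; simpa [Set.mem_Icc] using Finset.mem_Icc.mp this
      obtain ⟨p, hp, hpr⟩ := hbij.surjOn hr'
      refine Finset.mem_image.mpr ⟨p, ?_, hpr⟩
      refine Finset.mem_filter.mpr ⟨by simpa [Finset.mem_Icc] using hp, by rw [hpr]; exact hr⟩
  have hinjT : Set.InjOn (σb i) ↑T := hinj.mono (by
    intro x hx; simpa [Set.mem_Icc] using Finset.mem_Icc.mp (hTsub hx))
  have hTcard : T.card = m - q := by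
    rw [← hRcard, ← himg, Finset.card_image_of_injOn hinjT]
  have hsumR : ∑ j ∈ R, cumD d j i = ∑ p ∈ T, cumD d (σb i p) i := by
    rw [← himg, Finset.sum_image (fun a ha b hb hab => hinjT ha hb hab)]
  have hkey : ∑ p ∈ Finset.Icc 1 (m - q), cumD d (σb i p) i ≤ ∑ j ∈ R, cumD d j i := by
    rw [hsumR]
    exact key_sorted_sum m (m - q) (fun p => cumD d (σb i p) i)
      (fun p q h1 h2 h3 => hσord i hi p q h1 h2 h3) T hTsub hTcard
  have := hΘ q hq
  linarith

end
end

section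
/- For every (x, y, z) ∈ P and every i ∈ N, writing Y_i = Σ_{p=1}^{i} y_p, the minimum of Θ′ over all Θ′ ∈ ℝ_{≥0} satisfying Θ′ ≥ (m − q)·Y_i − Σ_{p=1}^{m−q} D_{σ̄_{i(p)}} for all q ∈ {0,1,…,k} equals Σ_{j∈Ω} max(Y_i − D_{ji}, 0), the total inventory of period i summed over all scenarios. -/
noncomputable section

/-- for `(x,y,z) ∈ P` and `i ∈ N`, with `Y_i = Σ_{p≤i} y_p`, the least
`Θ' ≥ 0` satisfying `Θ' ≥ (m-q)·Y_i - Σ_{p=1}^{m-q} D_{σ̄_{i(p)}}` for all `q ∈ {0,…,k}`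
equals the total inventory `Σ_{j∈Ω} max(Y_i - D_{ji}, 0)` of period `i`. -/
theorem theta_isLeast (n m k : ℕ) (hn : 1 ≤ n) (hm : 1 ≤ m) (hk : k < m)
    (d : ℕ → ℕ → ℝ)
    (hd : ∀ j ∈ Finset.Icc 1 m, ∀ i ∈ Finset.Icc 1 n, 0 ≤ d j i)
    (σb : ℕ → ℕ → ℕ)
    (hσbij : ∀ i ∈ Finset.Icc 1 n, Set.BijOn (σb i) (Set.Icc 1 m) (Set.Icc 1 m))
    (hσord : ∀ i ∈ Finset.Icc 1 n, ∀ p q, 1 ≤ p → p ≤ q → q ≤ m →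
      cumD d (σb i p) i ≤ cumD d (σb i q) i)
    (x y z : ℕ → ℝ) (hP : memP d n m k x y z)
    (i : ℕ) (hi : i ∈ Finset.Icc 1 n) :
    IsLeast
      {Θ : ℝ | 0 ≤ Θ ∧ ∀ q ≤ k,
        ((m : ℝ) - (q : ℝ)) * (∑ p ∈ Finset.Icc 1 i, y p) -
          ∑ p ∈ Finset.Icc 1 (m - q), cumD d (σb i p) i ≤ Θ}
      (∑ j ∈ Finset.Icc 1 m, max ((∑ p ∈ Finset.Icc 1 i, y p) - cumD d j i) 0) := by
  obtain ⟨hx, hy, hz, hcon, hzsum, hM⟩ := hP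
  set Y := ∑ p ∈ Finset.Icc 1 i, y p with hY
  have hbij := hσbij i hi
  have hord := hσord i hi
  have hreindex : ∀ F : ℝ → ℝ,
      ∑ p ∈ Finset.Icc 1 m, F (cumD d (σb i p) i) = ∑ j ∈ Finset.Icc 1 m, F (cumD d j i) := by
    intro F
    apply Finset.sum_bij (fun p (_ : p ∈ Finset.Icc 1 m) => σb i p)
    · intro a ha
      have : σb i a ∈ Set.Icc 1 m := hbij.mapsTo (by simpa using ha)
      simpa using this
    · intro a ha b hb hab
      exact hbij.injOn (by simpa using ha) (by simpa using hb) hab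
    · intro b hb
      obtain ⟨a, ha, hab⟩ := hbij.surjOn (show b ∈ Set.Icc 1 m by simpa using hb)
      exact ⟨a, by simpa using ha, hab⟩
    · intro a ha; rfl
  constructor
  · refine ⟨Finset.sum_nonneg fun j _ => le_max_right _ _, ?_⟩
    intro q hq
    have hqm : q ≤ m := le_of_lt (lt_of_le_of_lt hq hk)
    calc ((m:ℝ) - q) * Y - ∑ p ∈ Finset.Icc 1 (m-q), cumD d (σb i p) i
        = ∑ p ∈ Finset.Icc 1 (m-q), (Y - cumD d (σb i p) i) := by
          rw [Finset.sum_sub_distrib, Finset.sum_const, Nat.card_Icc,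
            Nat.add_sub_cancel, nsmul_eq_mul, Nat.cast_sub hqm]
      _ ≤ ∑ p ∈ Finset.Icc 1 (m-q), max (Y - cumD d (σb i p) i) 0 :=
          Finset.sum_le_sum fun p _ => le_max_left _ _
      _ ≤ ∑ p ∈ Finset.Icc 1 m, max (Y - cumD d (σb i p) i) 0 :=
          Finset.sum_le_sum_of_subset_of_nonneg
            (Finset.Icc_subset_Icc le_rfl (Nat.sub_le m q))
            (fun p _ _ => le_max_right _ _)
      _ = ∑ j ∈ Finset.Icc 1 m, max (Y - cumD d j i) 0 :=
          hreindex (fun t => max (Y - t) 0)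
  · rintro Θ ⟨hΘ0, hΘ⟩
    set A := (Finset.Icc 1 m).filter (fun j => Y < cumD d j i) with hA
    set q := A.card with hqdef
    have hzj1 : ∀ j ∈ A, z j = 1 := by
      intro j hj
      rw [hA, Finset.mem_filter] at hj
      rcases hz j hj.1 with h0 | h1
      · exfalso
        have hcj := hcon i hi j hj.1
        rw [h0] at hcj
        have h2 := hj.2
        rw [hY] at h2
        nlinarith
      · exact h1
    have hq_le : q ≤ k := by
      have h1 : (q:ℝ) = ∑ j ∈ A, z j := by
        rw [Finset.sum_congr rfl hzj1, Finset.sum_const, nsmul_eq_mul, mul_one, hqdef]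
      have h2 : ∑ j ∈ A, z j ≤ ∑ j ∈ Finset.Icc 1 m, z j := by
        apply Finset.sum_le_sum_of_subset_of_nonneg (by rw [hA]; exact Finset.filter_subset _ _)
        intro j hj _
        rcases hz j hj with h | h <;> simp [h]
      have h3 : (q:ℝ) ≤ (k:ℝ) := by linarith
      exact_mod_cast h3
    have hq_lt : q < m := lt_of_le_of_lt hq_le hk
    have hBcard : ((Finset.Icc 1 m).filter (fun p => Y < cumD d (σb i p) i)).card = q := by
      rw [hqdef, hA]
      apply Finset.card_bij (fun p (_ : p ∈ (Finset.Icc 1 m).filter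
        (fun p => Y < cumD d (σb i p) i)) => σb i p)
      · intro p hp
        rw [Finset.mem_filter] at hp ⊢
        refine ⟨?_, hp.2⟩
        have : σb i p ∈ Set.Icc 1 m := hbij.mapsTo (by simpa using hp.1)
        simpa using this
      · intro a ha b hb hab
        rw [Finset.mem_filter] at ha hb
        exact hbij.injOn (by simpa using ha.1) (by simpa using hb.1) hab
      · intro b hb
        rw [Finset.mem_filter] at hb
        obtain ⟨a, ha, hab⟩ := hbij.surjOn (show b ∈ Set.Icc 1 m by simpa using hb.1)
        refine ⟨a, Finset.mem_filter.mpr ⟨by simpa using ha, ?_⟩, hab⟩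
        rw [hab]; exact hb.2
    have hle : ∀ p ∈ Finset.Icc 1 (m - q), cumD d (σb i p) i ≤ Y := by
      intro p hp
      rw [Finset.mem_Icc] at hp
      by_contra hlt
      push_neg at hlt
      have hsub : Finset.Icc p m ⊆
          (Finset.Icc 1 m).filter (fun r => Y < cumD d (σb i r) i) := by
        intro r hr
        rw [Finset.mem_Icc] at hr
        rw [Finset.mem_filter, Finset.mem_Icc]
        exact ⟨⟨le_trans hp.1 hr.1, hr.2⟩, lt_of_lt_of_le hlt (hord p r hp.1 hr.1 hr.2)⟩
      have hcard := Finset.card_le_card hsub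
      rw [Nat.card_Icc, hBcard] at hcard
      omega
    have hgt : ∀ p ∈ Finset.Icc 1 m, m - q < p → Y < cumD d (σb i p) i := by
      intro p hp hpq
      rw [Finset.mem_Icc] at hp
      by_contra hle'
      push_neg at hle'
      have hsub : (Finset.Icc 1 m).filter (fun r => Y < cumD d (σb i r) i) ⊆
          Finset.Icc (p+1) m := by
        intro r hr
        rw [Finset.mem_filter, Finset.mem_Icc] at hr
        rw [Finset.mem_Icc]
        refine ⟨?_, hr.1.2⟩
        by_contra hrp
        push_neg at hrp
        have := hord r p hr.1.1 (by omega) hp.2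
        linarith [hr.2]
      have hcard := Finset.card_le_card hsub
      rw [Nat.card_Icc, hBcard] at hcard
      omega
    have hdisj : Disjoint (Finset.Icc 1 (m-q)) (Finset.Ioc (m-q) m) := by
      apply Finset.disjoint_left.mpr
      intro a ha hb
      rw [Finset.mem_Icc] at ha; rw [Finset.mem_Ioc] at hb; omega
    have hsplit : Finset.Icc 1 m = Finset.Icc 1 (m-q) ∪ Finset.Ioc (m-q) m := by
      ext a
      simp only [Finset.mem_Icc, Finset.mem_Ioc, Finset.mem_union]
      omega
    have hS : ∑ p ∈ Finset.Icc 1 m, max (Y - cumD d (σb i p) i) 0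
        = ∑ p ∈ Finset.Icc 1 (m-q), (Y - cumD d (σb i p) i) := by
      rw [hsplit, Finset.sum_union hdisj]
      have h1 : ∑ p ∈ Finset.Ioc (m-q) m, max (Y - cumD d (σb i p) i) 0 = 0 := by
        apply Finset.sum_eq_zero
        intro p hp
        rw [Finset.mem_Ioc] at hp
        have hg := hgt p (Finset.mem_Icc.mpr ⟨by omega, hp.2⟩) hp.1
        exact max_eq_right (by linarith)
      have h2 : ∀ p ∈ Finset.Icc 1 (m-q),
          max (Y - cumD d (σb i p) i) 0 = Y - cumD d (σb i p) i := by
        intro p hp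
        exact max_eq_left (by linarith [hle p hp])
      rw [Finset.sum_congr rfl h2, h1, add_zero]
    calc ∑ j ∈ Finset.Icc 1 m, max (Y - cumD d j i) 0
        = ∑ p ∈ Finset.Icc 1 m, max (Y - cumD d (σb i p) i) 0 :=
          (hreindex (fun t => max (Y - t) 0)).symm
      _ = ∑ p ∈ Finset.Icc 1 (m-q), (Y - cumD d (σb i p) i) := hS
      _ = ((m:ℝ) - q) * Y - ∑ p ∈ Finset.Icc 1 (m-q), cumD d (σb i p) i := by
          rw [Finset.sum_sub_distrib, Finset.sum_const, Nat.card_Icc,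
            Nat.add_sub_cancel, nsmul_eq_mul, Nat.cast_sub (le_of_lt hq_lt)]
      _ ≤ Θ := hΘ q hq_le

end
end

section
/- Let f, c ∈ ℝ^n and h ∈ ℝ_{≥0}^n be cost vectors. Then the optimal value of the deterministic equivalent program min{ f·x + c·y + (1/m) Σ_{j∈Ω} Σ_{t∈N} h_t s_{jt} : (x, y, z) ∈ P, s ∈ ℝ_{≥0}^{m×n}, s_{jt} ≥ Σ_{i=1}^{t} y_i − D_{jt} for all j ∈ Ω and t ∈ N } equals the optimal value of the new formulation min{ f·x + c·y + (1/m) Σ_{i∈N} h_i Θ′_i : (x, y, z) ∈ P, Θ′ ∈ ℝ_{≥0}^n, Θ′_i ≥ (m − q)·Σ_{p=1}^{i} y_p − Σ_{p=1}^{m−q} D_{σ̄_{i(p)}} for all i ∈ N and q ∈ {0,1,…,k} }. -/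
noncomputable section

/-!
For a fixed period with cumulative production `Y`, the cheapest inventory variables of the
deterministic equivalent are `s_j = max 0 (Y - D_j)`, so both programs reduce to comparing
`Σ_j max 0 (Y - D_j)` with the aggregated variable `Θ'`. Any feasible `s` dominates each
aggregated inequality, since `(m - q) Y - Σ_{p ≤ m - q} D_{σ(p)}` sums `Y - D_j` over only
`m - q` scenarios. Conversely, with the demands sorted, the scenarios with `D_j ≤ Y` form a
prefix of length `r`, and the others must be switched off (`z_j = 1`), so `m - r ≤ k`; the
aggregated inequality for `q = m - r` is then exactly `Σ_j max 0 (Y - D_j) ≤ Θ'`.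
-/

open Finset

section Scenarios

variable {m : ℕ}

lemma mem_Icc_of_bijOn {σ : ℕ → ℕ} (hσ : Set.BijOn σ (Set.Icc 1 m) (Set.Icc 1 m)) {p : ℕ}
    (hp : p ∈ Icc 1 m) : σ p ∈ Icc 1 m := by
  simpa using hσ.mapsTo (by simpa using hp)

lemma sum_Icc_comp_of_bijOn {M : Type*} [AddCommMonoid M] {σ : ℕ → ℕ}
    (hσ : Set.BijOn σ (Set.Icc 1 m) (Set.Icc 1 m)) (F : ℕ → M) :
    ∑ p ∈ Icc 1 m, F (σ p) = ∑ j ∈ Icc 1 m, F j :=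
  sum_nbij σ (fun _ => mem_Icc_of_bijOn hσ) (by simpa using hσ.injOn) (by simpa using hσ.surjOn)
    fun _ _ => rfl

lemma card_filter_lt_le_of_sum_le {ι : Type*} {s : Finset ι} {k : ℕ} {D z : ι → ℝ} {Y : ℝ}
    (hz : ∀ j ∈ s, z j = 0 ∨ z j = 1) (hzk : ∑ j ∈ s, z j ≤ k)
    (hD : ∀ j ∈ s, D j * (1 - z j) ≤ Y) :
    #{j ∈ s | Y < D j} ≤ k := by
  have hz_one : ∀ j ∈ s, Y < D j → z j = 1 := fun j hj hY =>
    (hz j hj).resolve_left fun h0 => by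
      have := hD j hj
      rw [h0, sub_zero, mul_one] at this
      linarith
  have : (#{j ∈ s | Y < D j} : ℝ) ≤ k :=
    calc (#{j ∈ s | Y < D j} : ℝ) = ∑ j ∈ s with Y < D j, z j := by
          rw [sum_congr rfl fun j hj => hz_one j (mem_filter.1 hj).1 (mem_filter.1 hj).2]
          simp
      _ ≤ ∑ j ∈ s, z j :=
          sum_le_sum_of_subset_of_nonneg (filter_subset _ _) fun j hj _ => by
            rcases hz j hj with h | h <;> simp [h]
      _ ≤ k := hzk
  exact_mod_cast this

lemma mul_sub_sum_Icc_le_sum {q : ℕ} (hq : q ≤ m) {E t : ℕ → ℝ} {Y : ℝ}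
    (ht : ∀ p ∈ Icc 1 m, 0 ≤ t p ∧ Y - E p ≤ t p) :
    ((m : ℝ) - q) * Y - ∑ p ∈ Icc 1 (m - q), E p ≤ ∑ p ∈ Icc 1 m, t p := by
  have hsub : Icc 1 (m - q) ⊆ Icc 1 m := Icc_subset_Icc_right (Nat.sub_le m q)
  calc ((m : ℝ) - q) * Y - ∑ p ∈ Icc 1 (m - q), E p = ∑ p ∈ Icc 1 (m - q), (Y - E p) := by
        rw [sum_sub_distrib, sum_const, Nat.card_Icc, nsmul_eq_mul, Nat.add_sub_cancel,
          Nat.cast_sub hq]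
    _ ≤ ∑ p ∈ Icc 1 (m - q), t p := sum_le_sum fun p hp => (ht p (hsub hp)).2
    _ ≤ ∑ p ∈ Icc 1 m, t p := sum_le_sum_of_subset_of_nonneg hsub fun p hp _ => (ht p hp).1

lemma sum_max_sub_le_of_monotoneOn {k : ℕ} {E : ℕ → ℝ} {Y Θ : ℝ}
    (hE : MonotoneOn E (Set.Icc 1 m)) (hfew : #{p ∈ Icc 1 m | Y < E p} ≤ k)
    (hΘ : ∀ q ≤ k, ((m : ℝ) - q) * Y - ∑ p ∈ Icc 1 (m - q), E p ≤ Θ) :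
    ∑ p ∈ Icc 1 m, max 0 (Y - E p) ≤ Θ := by
  classical
  set r := Nat.findGreatest (fun p => E p ≤ Y) m
  have hrm : r ≤ m := Nat.findGreatest_le m
  have covered_iff : ∀ p ∈ Icc 1 m, E p ≤ Y ↔ p ≤ r := by
    intro p hp
    have hp' := mem_Icc.1 hp
    refine ⟨fun h => Nat.le_findGreatest hp'.2 h, fun hpr => ?_⟩
    have hr0 : r ≠ 0 := by omega
    have hEr : E r ≤ Y := Nat.findGreatest_of_ne_zero rfl hr0
    exact (hE ⟨hp'.1, hp'.2⟩ ⟨by omega, hrm⟩ hpr).trans hEr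
  have hmr : m - r ≤ k := by
    refine le_trans ?_ hfew
    rw [← Nat.card_Ioc]
    refine card_le_card fun p hp => ?_
    have hp' := mem_Ioc.1 hp
    have hp_mem : p ∈ Icc 1 m := mem_Icc.2 ⟨by omega, hp'.2⟩
    exact mem_filter.2 ⟨hp_mem, not_le.1 fun h => by have := (covered_iff p hp_mem).1 h; omega⟩
  calc ∑ p ∈ Icc 1 m, max 0 (Y - E p) = ∑ p ∈ Icc 1 r, (Y - E p) := by
        rw [← sum_subset (Icc_subset_Icc_right hrm) fun p hp hpr => ?_]
        · refine sum_congr rfl fun p hp => max_eq_right ?_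
          have hp_mem : p ∈ Icc 1 m := Icc_subset_Icc_right hrm hp
          linarith [(covered_iff p hp_mem).2 (mem_Icc.1 hp).2]
        · have : ¬ E p ≤ Y := fun h => hpr (mem_Icc.2 ⟨(mem_Icc.1 hp).1, (covered_iff p hp).1 h⟩)
          exact max_eq_left (by linarith)
    _ = ((m : ℝ) - (m - r : ℕ)) * Y - ∑ p ∈ Icc 1 (m - (m - r)), E p := by
        rw [Nat.sub_sub_self hrm, Nat.cast_sub hrm, sum_sub_distrib, sum_const, Nat.card_Icc,
          Nat.add_sub_cancel, nsmul_eq_mul]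
        ring
    _ ≤ Θ := hΘ (m - r) hmr

lemma sum_max_sub_le_of_bijOn {k : ℕ} {σ : ℕ → ℕ} (hσ : Set.BijOn σ (Set.Icc 1 m) (Set.Icc 1 m))
    {D z : ℕ → ℝ} {Y Θ : ℝ} (hsorted : MonotoneOn (D ∘ σ) (Set.Icc 1 m))
    (hz : ∀ j ∈ Icc 1 m, z j = 0 ∨ z j = 1) (hzk : ∑ j ∈ Icc 1 m, z j ≤ k)
    (hD : ∀ j ∈ Icc 1 m, D j * (1 - z j) ≤ Y)
    (hΘ : ∀ q ≤ k, ((m : ℝ) - q) * Y - ∑ p ∈ Icc 1 (m - q), D (σ p) ≤ Θ) :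
    ∑ j ∈ Icc 1 m, max 0 (Y - D j) ≤ Θ := by
  rw [← sum_Icc_comp_of_bijOn hσ]
  refine sum_max_sub_le_of_monotoneOn hsorted ?_ hΘ
  refine card_filter_lt_le_of_sum_le (z := z ∘ σ) (fun p hp => hz _ (mem_Icc_of_bijOn hσ hp)) ?_
    fun p hp => hD _ (mem_Icc_of_bijOn hσ hp)
  rwa [Function.comp_def, sum_Icc_comp_of_bijOn hσ]

end Scenarios

theorem dep_value_eq_new_formulation_value_general (n m k : ℕ)
    (hk : k < m)
    (d : ℕ → ℕ → ℝ)
    (σb : ℕ → ℕ → ℕ)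
    (hσbij : ∀ i ∈ Finset.Icc 1 n, Set.BijOn (σb i) (Set.Icc 1 m) (Set.Icc 1 m))
    (hσord : ∀ i ∈ Finset.Icc 1 n, ∀ p q, 1 ≤ p → p ≤ q → q ≤ m →
      cumD d (σb i p) i ≤ cumD d (σb i q) i)
    (f c h : ℕ → ℝ) (hh : ∀ t ∈ Finset.Icc 1 n, 0 ≤ h t) :
    sInf {v : ℝ | ∃ x y z : ℕ → ℝ, ∃ s : ℕ → ℕ → ℝ,
        memP d n m k x y z ∧
        (∀ j ∈ Finset.Icc 1 m, ∀ t ∈ Finset.Icc 1 n,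
          0 ≤ s j t ∧ (∑ i ∈ Finset.Icc 1 t, y i) - cumD d j t ≤ s j t) ∧
        v = ∑ i ∈ Finset.Icc 1 n, f i * x i + ∑ i ∈ Finset.Icc 1 n, c i * y i +
            (1 / (m : ℝ)) * ∑ j ∈ Finset.Icc 1 m, ∑ t ∈ Finset.Icc 1 n, h t * s j t} =
    sInf {v : ℝ | ∃ x y z Θ : ℕ → ℝ,
        memP d n m k x y z ∧
        (∀ i ∈ Finset.Icc 1 n, 0 ≤ Θ i ∧ ∀ q ≤ k,
          ((m : ℝ) - (q : ℝ)) * (∑ p ∈ Finset.Icc 1 i, y p) -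
            ∑ p ∈ Finset.Icc 1 (m - q), cumD d (σb i p) i ≤ Θ i) ∧
        v = ∑ i ∈ Finset.Icc 1 n, f i * x i + ∑ i ∈ Finset.Icc 1 n, c i * y i +
            (1 / (m : ℝ)) * ∑ i ∈ Finset.Icc 1 n, h i * Θ i} := by
  refine csInf_eq_csInf_of_forall_exists_le ?_ ?_
  · rintro _ ⟨x, y, z, s, hP, hs, rfl⟩
    refine ⟨_, ⟨x, y, z, fun i => ∑ j ∈ Icc 1 m, s j i, hP, fun i hi =>
      ⟨sum_nonneg fun j hj => (hs j hj i hi).1, fun q hq => ?_⟩, rfl⟩, le_of_eq ?_⟩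
    · exact (mul_sub_sum_Icc_le_sum (hq.trans hk.le) fun p hp =>
        hs _ (mem_Icc_of_bijOn (hσbij i hi) hp) i hi).trans_eq
          (sum_Icc_comp_of_bijOn (hσbij i hi) fun j => s j i)
    · simp_rw [mul_sum]
      rw [sum_comm]
  · rintro _ ⟨x, y, z, Θ, hP, hΘ, rfl⟩
    refine ⟨_, ⟨x, y, z, fun j t => max 0 (∑ i ∈ Icc 1 t, y i - cumD d j t), hP,
      fun j _ t _ => ⟨le_max_left _ _, le_max_right _ _⟩, rfl⟩, ?_⟩
    obtain ⟨-, -, hz, hD, hzk, -⟩ := hP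
    gcongr _ + 1 / (m : ℝ) * ?_
    rw [sum_comm]
    refine sum_le_sum fun t ht => ?_
    rw [← mul_sum]
    refine mul_le_mul_of_nonneg_left ?_ (hh t ht)
    exact sum_max_sub_le_of_bijOn (hσbij t ht)
      (fun p hp q hq hpq => hσord t ht p q hp.1 hpq hq.2) hz hzk (hD t ht) (hΘ t ht).2

/-- the optimal value of the deterministic equivalent program (with the
`m × n` inventory variables `s`) equals the optimal value of the new formulation (with the
`n` aggregated inventory variables `Θ'` and the `k+1` sorted inequalities per period). -/
theorem dep_value_eq_new_formulation_value (n m k : ℕ) (hn : 1 ≤ n) (hm : 1 ≤ m)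
    (hk : k < m)
    (d : ℕ → ℕ → ℝ)
    (hd : ∀ j ∈ Finset.Icc 1 m, ∀ i ∈ Finset.Icc 1 n, 0 ≤ d j i)
    (σb : ℕ → ℕ → ℕ)
    (hσbij : ∀ i ∈ Finset.Icc 1 n, Set.BijOn (σb i) (Set.Icc 1 m) (Set.Icc 1 m))
    (hσord : ∀ i ∈ Finset.Icc 1 n, ∀ p q, 1 ≤ p → p ≤ q → q ≤ m →
      cumD d (σb i p) i ≤ cumD d (σb i q) i)
    (f c h : ℕ → ℝ) (hh : ∀ t ∈ Finset.Icc 1 n, 0 ≤ h t) :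
    sInf {v : ℝ | ∃ x y z : ℕ → ℝ, ∃ s : ℕ → ℕ → ℝ,
        memP d n m k x y z ∧
        (∀ j ∈ Finset.Icc 1 m, ∀ t ∈ Finset.Icc 1 n,
          0 ≤ s j t ∧ (∑ i ∈ Finset.Icc 1 t, y i) - cumD d j t ≤ s j t) ∧
        v = ∑ i ∈ Finset.Icc 1 n, f i * x i + ∑ i ∈ Finset.Icc 1 n, c i * y i +
            (1 / (m : ℝ)) * ∑ j ∈ Finset.Icc 1 m, ∑ t ∈ Finset.Icc 1 n, h t * s j t} =
    sInf {v : ℝ | ∃ x y z Θ : ℕ → ℝ,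
        memP d n m k x y z ∧
        (∀ i ∈ Finset.Icc 1 n, 0 ≤ Θ i ∧ ∀ q ≤ k,
          ((m : ℝ) - (q : ℝ)) * (∑ p ∈ Finset.Icc 1 i, y p) -
            ∑ p ∈ Finset.Icc 1 (m - q), cumD d (σb i p) i ≤ Θ i) ∧
        v = ∑ i ∈ Finset.Icc 1 n, f i * x i + ∑ i ∈ Finset.Icc 1 n, c i * y i +
            (1 / (m : ℝ)) * ∑ i ∈ Finset.Icc 1 n, h i * Θ i} :=
  dep_value_eq_new_formulation_value_general n m k hk d σb hσbij hσord f c h hh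
end
end

section
/- For every ℓ ∈ {2,…,n}, every scenario j ∈ Ω, and every subset T_ℓ = {t_{ℓ(1)},…,t_{ℓ(a)}} ⊆ T*_ℓ ordered so that D_{t_{ℓ(1)}} ≥ … ≥ D_{t_{ℓ(a)}}, with t_{ℓ(a+1)} := σ_{ℓ(k+1)}, every point (x, y, z, s) ∈ P₊ satisfies s_{j(ℓ−1)} + (D_{t_{ℓ(1)}} − D_{j(ℓ−1)}) x_ℓ + Σ_{p=1}^{a} (D_{t_{ℓ(p)}} − D_{t_{ℓ(p+1)}}) z_{t_{ℓ(p)}} ≥ D_{t_{ℓ(1)}} − D_{j(ℓ−1)}. -/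
noncomputable section

/-- Membership in the feasible set `P₊` (with the stock variables `s`). -/
def memPplus (d : ℕ → ℕ → ℝ) (n m k : ℕ) (x y z : ℕ → ℝ) (s : ℕ → ℕ → ℝ) : Prop :=
  memP d n m k x y z ∧
  ∀ j ∈ Finset.Icc 1 m, ∀ t ∈ Finset.Icc 1 n,
    0 ≤ s j t ∧ (∑ i ∈ Finset.Icc 1 t, y i) - cumD d j t ≤ s j t

/-- Telescoping sum over `Icc 1 b`. -/
lemma tele_sum (f : ℕ → ℝ) : ∀ b : ℕ, ∑ p ∈ Finset.Icc 1 b, (f p - f (p + 1)) = f 1 - f (b + 1)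
  | 0 => by simp
  | (b + 1) => by
    rw [Finset.sum_Icc_succ_top (by omega : 1 ≤ b + 1), tele_sum f b]
    ring

/-- validity of the inequalities (A.1) involving the stock variables for `P₊`.
`σ i` sorts cumulative demands through period `i` in nonincreasing order, `τ` lists
`T_ℓ ⊆ T*_ℓ` in nonincreasing order with convention `τ (a+1) = σ_{ℓ(k+1)}`. -/
theorem stock_inequality_valid (n m k : ℕ) (hm : 1 ≤ m) (hk : k < m)
    (d : ℕ → ℕ → ℝ)
    (hd : ∀ j ∈ Finset.Icc 1 m, ∀ i ∈ Finset.Icc 1 n, 0 ≤ d j i)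
    (σ : ℕ → ℕ → ℕ)
    (hσbij : ∀ i ∈ Finset.Icc 1 n, Set.BijOn (σ i) (Set.Icc 1 m) (Set.Icc 1 m))
    (hσord : ∀ i ∈ Finset.Icc 1 n, ∀ p q, 1 ≤ p → p ≤ q → q ≤ m →
      cumD d (σ i q) i ≤ cumD d (σ i p) i)
    (ℓ : ℕ) (hℓ : ℓ ∈ Finset.Icc 2 n)
    (j : ℕ) (hj : j ∈ Finset.Icc 1 m)
    (a : ℕ) (ha : 1 ≤ a) (τ : ℕ → ℕ)
    (hτmem : ∀ p ∈ Finset.Icc 1 a, τ p ∈ (Finset.Icc 1 k).image (σ ℓ))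
    (hτinj : Set.InjOn τ (Set.Icc 1 a))
    (hτord : ∀ p q, 1 ≤ p → p ≤ q → q ≤ a → cumD d (τ q) ℓ ≤ cumD d (τ p) ℓ)
    (hτconv : τ (a + 1) = σ ℓ (k + 1))
    (x y z : ℕ → ℝ) (s : ℕ → ℕ → ℝ) (hP : memPplus d n m k x y z s) :
    cumD d (τ 1) ℓ - cumD d j (ℓ - 1) ≤
      s j (ℓ - 1) + (cumD d (τ 1) ℓ - cumD d j (ℓ - 1)) * x ℓ +
      ∑ p ∈ Finset.Icc 1 a, (cumD d (τ p) ℓ - cumD d (τ (p + 1)) ℓ) * z (τ p) := by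
  obtain ⟨⟨hx01, hy0, hz01, hcons, hzsum, hMx⟩, hs⟩ := hP
  obtain ⟨hℓ2, hℓn⟩ := Finset.mem_Icc.mp hℓ
  have hℓmem : ℓ ∈ Finset.Icc 1 n := Finset.mem_Icc.mpr ⟨by omega, hℓn⟩
  have hℓ1mem : ℓ - 1 ∈ Finset.Icc 1 n := Finset.mem_Icc.mpr ⟨by omega, by omega⟩
  have hσmem : ∀ q, 1 ≤ q → q ≤ m → σ ℓ q ∈ Finset.Icc 1 m := by
    intro q h1 h2
    have := (hσbij ℓ hℓmem).mapsTo (Set.mem_Icc.mpr ⟨h1, h2⟩)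
    exact Finset.mem_Icc.mpr (Set.mem_Icc.mp this)
  have hτm : ∀ p ∈ Finset.Icc 1 a, τ p ∈ Finset.Icc 1 m := by
    intro p hp
    obtain ⟨q, hq, hqe⟩ := Finset.mem_image.mp (hτmem p hp)
    obtain ⟨hq1, hqk⟩ := Finset.mem_Icc.mp hq
    exact hqe ▸ hσmem q hq1 (by omega)
  -- each τ p with p ∈ Icc 1 a dominates τ (p+1) (including the convention at p = a)
  have hstep : ∀ p ∈ Finset.Icc 1 a, cumD d (τ (p + 1)) ℓ ≤ cumD d (τ p) ℓ := by
    intro p hp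
    obtain ⟨hp1, hpa⟩ := Finset.mem_Icc.mp hp
    rcases eq_or_lt_of_le hpa with h | h
    · subst h
      obtain ⟨q, hq, hqe⟩ := Finset.mem_image.mp (hτmem p hp)
      obtain ⟨hq1, hqk⟩ := Finset.mem_Icc.mp hq
      rw [hτconv, ← hqe]
      exact hσord ℓ hℓmem q (k + 1) hq1 (by omega) (by omega)
    · exact hτord p (p + 1) hp1 (by omega) (by omega)
  have hzτ01 : ∀ p ∈ Finset.Icc 1 a, z (τ p) = 0 ∨ z (τ p) = 1 := fun p hp =>
    hz01 (τ p) (hτm p hp)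
  have hsumnn : 0 ≤ ∑ p ∈ Finset.Icc 1 a, (cumD d (τ p) ℓ - cumD d (τ (p + 1)) ℓ) * z (τ p) := by
    refine Finset.sum_nonneg fun p hp => mul_nonneg (by linarith [hstep p hp]) ?_
    rcases hzτ01 p hp with h | h <;> rw [h] <;> norm_num
  have hs0 : 0 ≤ s j (ℓ - 1) := (hs j hj (ℓ - 1) hℓ1mem).1
  -- key lemma: if some scenario r has z r = 0 and x ℓ = 0, then stock at ℓ-1 covers D_{r ℓ}
  have hA : ∀ r ∈ Finset.Icc 1 m, z r = 0 → x ℓ = 0 →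
      cumD d r ℓ - cumD d j (ℓ - 1) ≤ s j (ℓ - 1) := by
    intro r hr hzr hxℓ
    have hyℓ : y ℓ ≤ 0 := by
      have := hMx ℓ hℓmem
      rw [hxℓ, mul_zero] at this
      exact this
    have hc := hcons ℓ hℓmem r hr
    rw [hzr] at hc
    have hsplit : ∑ i ∈ Finset.Icc 1 ℓ, y i = (∑ i ∈ Finset.Icc 1 (ℓ - 1), y i) + y ℓ := by
      have hℓeq : ℓ - 1 + 1 = ℓ := by omega
      conv_lhs => rw [← hℓeq]
      rw [Finset.sum_Icc_succ_top (by omega : 1 ≤ ℓ - 1 + 1), hℓeq]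
    have hs2 := (hs j hj (ℓ - 1) hℓ1mem).2
    simp only [mul_sub, mul_zero, mul_one] at hc
    linarith
  rcases hx01 ℓ hℓmem with hx0 | hx1
  · -- x ℓ = 0
    by_cases hzero : ∃ p, (p ∈ Finset.Icc 1 a ∧ z (τ p) = 0)
    · -- some z (τ p) = 0; take the least such p
      classical
      obtain ⟨hp₀, hzp₀⟩ := Nat.find_spec hzero
      set p₀ := Nat.find hzero with hp₀def
      obtain ⟨hp₀1, hp₀a⟩ := Finset.mem_Icc.mp hp₀
      have hones : ∀ p ∈ Finset.Icc 1 (p₀ - 1), z (τ p) = 1 := by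
        intro p hp
        obtain ⟨h1, h2⟩ := Finset.mem_Icc.mp hp
        have hlt : p < p₀ := by omega
        have := Nat.find_min hzero hlt
        rcases hzτ01 p (Finset.mem_Icc.mpr ⟨h1, by omega⟩) with h | h
        · exact absurd ⟨Finset.mem_Icc.mpr ⟨h1, by omega⟩, h⟩ this
        · exact h
      have hsub : Finset.Icc 1 (p₀ - 1) ⊆ Finset.Icc 1 a := by
        intro p hp; obtain ⟨h1, h2⟩ := Finset.mem_Icc.mp hp
        exact Finset.mem_Icc.mpr ⟨h1, by omega⟩
      have hge : ∑ p ∈ Finset.Icc 1 (p₀ - 1), (cumD d (τ p) ℓ - cumD d (τ (p + 1)) ℓ) * z (τ p)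
          ≤ ∑ p ∈ Finset.Icc 1 a, (cumD d (τ p) ℓ - cumD d (τ (p + 1)) ℓ) * z (τ p) := by
        refine Finset.sum_le_sum_of_subset_of_nonneg hsub fun p hp _ =>
          mul_nonneg (by linarith [hstep p hp]) ?_
        rcases hzτ01 p hp with h | h <;> rw [h] <;> norm_num
      have hteleq : ∑ p ∈ Finset.Icc 1 (p₀ - 1), (cumD d (τ p) ℓ - cumD d (τ (p + 1)) ℓ) * z (τ p)
          = cumD d (τ 1) ℓ - cumD d (τ p₀) ℓ := by
        have : ∀ p ∈ Finset.Icc 1 (p₀ - 1),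
            (cumD d (τ p) ℓ - cumD d (τ (p + 1)) ℓ) * z (τ p)
            = (fun q => cumD d (τ q) ℓ) p - (fun q => cumD d (τ q) ℓ) (p + 1) := by
          intro p hp; rw [hones p hp, mul_one]
        rw [Finset.sum_congr rfl this, tele_sum (fun q => cumD d (τ q) ℓ) (p₀ - 1)]
        have : p₀ - 1 + 1 = p₀ := by omega
        rw [this]
      have hAs := hA (τ p₀) (hτm p₀ hp₀) hzp₀ hx0
      rw [hx0, mul_zero]
      linarith
    · -- all z (τ p) = 1
      push_neg at hzero
      have hones : ∀ p ∈ Finset.Icc 1 a, z (τ p) = 1 := by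
        intro p hp
        rcases hzτ01 p hp with h | h
        · exact absurd h (hzero p hp)
        · exact h
      have hteleq : ∑ p ∈ Finset.Icc 1 a, (cumD d (τ p) ℓ - cumD d (τ (p + 1)) ℓ) * z (τ p)
          = cumD d (τ 1) ℓ - cumD d (σ ℓ (k + 1)) ℓ := by
        have : ∀ p ∈ Finset.Icc 1 a,
            (cumD d (τ p) ℓ - cumD d (τ (p + 1)) ℓ) * z (τ p)
            = (fun q => cumD d (τ q) ℓ) p - (fun q => cumD d (τ q) ℓ) (p + 1) := by
          intro p hp; rw [hones p hp, mul_one]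
        rw [Finset.sum_congr rfl this, tele_sum (fun q => cumD d (τ q) ℓ) a, hτconv]
      -- find a scenario among σℓ(1..k+1) with z = 0
      classical
      set S : Finset ℕ := (Finset.Icc 1 (k + 1)).image (σ ℓ) with hSdef
      have hSsub : S ⊆ Finset.Icc 1 m := by
        intro r hr
        obtain ⟨q, hq, hqe⟩ := Finset.mem_image.mp hr
        obtain ⟨h1, h2⟩ := Finset.mem_Icc.mp hq
        exact hqe ▸ hσmem q h1 (by omega)
      have hinj : Set.InjOn (σ ℓ) ↑(Finset.Icc 1 (k + 1)) := by
        have := (hσbij ℓ hℓmem).injOn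
        refine this.mono ?_
        rw [Finset.coe_Icc]
        exact Set.Icc_subset_Icc le_rfl (by omega)
      have hScard : S.card = k + 1 := by
        rw [hSdef, Finset.card_image_of_injOn hinj, Nat.card_Icc]; omega
      have hexr : ∃ r ∈ S, z r = 0 := by
        by_contra hcon
        push_neg at hcon
        have hall1 : ∀ r ∈ S, z r = 1 := by
          intro r hr
          rcases hz01 r (hSsub hr) with h | h
          · exact absurd h (hcon r hr)
          · exact h
        have h1 : ∑ r ∈ S, z r = (k + 1 : ℝ) := by
          rw [Finset.sum_congr rfl hall1, Finset.sum_const, hScard]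
          push_cast; ring
        have h2 : ∑ r ∈ S, z r ≤ ∑ r ∈ Finset.Icc 1 m, z r := by
          refine Finset.sum_le_sum_of_subset_of_nonneg hSsub fun r hr _ => ?_
          rcases hz01 r hr with h | h <;> rw [h] <;> norm_num
        linarith
      obtain ⟨r, hrS, hzr⟩ := hexr
      obtain ⟨q, hq, hqe⟩ := Finset.mem_image.mp hrS
      obtain ⟨hq1, hq2⟩ := Finset.mem_Icc.mp hq
      have hrd : cumD d (σ ℓ (k + 1)) ℓ ≤ cumD d r ℓ := by
        rw [← hqe]
        exact hσord ℓ hℓmem q (k + 1) hq1 hq2 (by omega)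
      have hAs := hA r (hSsub hrS) hzr hx0
      rw [hx0, mul_zero]
      linarith
  · -- x ℓ = 1
    rw [hx1, mul_one]
    linarith

end
end
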